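/- arXiv:2312.13209 — 14 statements merged into one kernel-verified Lean document; each statement's English description precedes it below -/
import Mathlib

section
/- Let C be a pretriangulated category with shift Σ and let X₁ →f₁→ X₂ →f₂→ X₃ →f₃→ X₄ be a diagram in C. Then the fiber-cofiber Toda bracket is contained in the intersection of the iterated cofiber and iterated fiber Toda brackets: ⟨f₃,f₂,f₁⟩fc ⊆ ⟨f₃,f₂,f₁⟩cc ∩ ⟨f₃,f₂,f₁⟩ff. (This is the case n = 3 of the paper's Lemma 4.4; no hypothesis on the composites is needed, and the proof uses only the pretriangulated axioms.) -/
open CategoryTheory Category Limits Pretriangulated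

variable {C : Type*} [Category C] [Preadditive C] [HasZeroObject C]
  [HasShift C ℤ] [∀ n : ℤ, (CategoryTheory.shiftFunctor C n).Additive] [Pretriangulated C]

/-- The iterated cofiber Toda bracket of `h₁, h₂, h₃`. -/
def todaCC {A₁ A₂ A₃ A₄ : C} (h₁ : A₁ ⟶ A₂) (h₂ : A₂ ⟶ A₃) (h₃ : A₃ ⟶ A₄) :
    Set (A₁⟦(1:ℤ)⟧ ⟶ A₄) :=
  {ψ | ∃ (Y : C) (y : A₂ ⟶ Y) (y' : Y ⟶ A₁⟦(1:ℤ)⟧) (φ : Y ⟶ A₃),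
    (Triangle.mk h₁ y y' ∈ distTriang C) ∧ y ≫ φ = h₂ ∧ y' ≫ ψ = φ ≫ h₃}

/-- The iterated fiber Toda bracket of `h₁, h₂, h₃`. -/
def todaFF {A₁ A₂ A₃ A₄ : C} (h₁ : A₁ ⟶ A₂) (h₂ : A₂ ⟶ A₃) (h₃ : A₃ ⟶ A₄) :
    Set (A₁⟦(1:ℤ)⟧ ⟶ A₄) :=
  {ψ | ∃ (δ : A₁ ⟶ A₄⟦(-1:ℤ)⟧) (W : C) (w : A₄⟦(-1:ℤ)⟧ ⟶ W) (w' : W ⟶ A₃) (γ : A₂ ⟶ W),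
    ψ = δ⟦(1:ℤ)⟧' ≫ (shiftFunctorCompIsoId C (-1) 1 (by omega)).hom.app A₄ ∧
    (Triangle.mk w w' (h₃ ≫ (shiftFunctorCompIsoId C (-1) 1 (by omega)).inv.app A₄) ∈
      distTriang C) ∧
    δ ≫ w = h₁ ≫ γ ∧ γ ≫ w' = h₂}

/-- The fiber-cofiber Toda bracket of `h₁, h₂, h₃`. -/
def todaFC {A₁ A₂ A₃ A₄ : C} (h₁ : A₁ ⟶ A₂) (h₂ : A₂ ⟶ A₃) (h₃ : A₃ ⟶ A₄) :
    Set (A₁⟦(1:ℤ)⟧ ⟶ A₄) :=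
  {ψ | ∃ (Z : C) (z₁ : Z ⟶ A₂) (z₃ : A₃ ⟶ Z⟦(1:ℤ)⟧) (β₁ : A₁ ⟶ Z) (β₂ : Z⟦(1:ℤ)⟧ ⟶ A₄),
    (Triangle.mk z₁ h₂ z₃ ∈ distTriang C) ∧ β₁ ≫ z₁ = h₁ ∧ z₃ ≫ β₂ = h₃ ∧
    ψ = β₁⟦(1:ℤ)⟧' ≫ β₂}

/-!
Both inclusions are instances of TR3. Given the fiber-cofiber data `Z → A₂ → A₃ → ΣZ` with
`β₁ : A₁ → Z` and `β₂ : ΣZ → A₄`, completing `(β₁, 𝟙)` from a cofiber triangle of `h₁` to that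
triangle yields `φ` witnessing `⟨h₃, h₂, h₁⟩cc`; completing `(Σ⁻¹β₂, 𝟙)` from that triangle to a
fiber triangle of `h₃` yields `γ` witnessing `⟨h₃, h₂, h₁⟩ff` with `δ = β₁ ≫ Σ⁻¹β₂`.
-/

theorem todaFC_subset_todaCC {A₁ A₂ A₃ A₄ : C} (h₁ : A₁ ⟶ A₂) (h₂ : A₂ ⟶ A₃) (h₃ : A₃ ⟶ A₄) :
    todaFC h₁ h₂ h₃ ⊆ todaCC h₁ h₂ h₃ := by
  rintro ψ ⟨Z, z₁, z₃, β₁, β₂, hZ, hβ₁, hβ₂, rfl⟩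
  obtain ⟨Y, y, y', hY⟩ := distinguished_cocone_triangle h₁
  obtain ⟨φ, hφ₂, hφ₃⟩ : ∃ φ : Y ⟶ A₃, y ≫ φ = 𝟙 A₂ ≫ h₂ ∧ y' ≫ β₁⟦(1 : ℤ)⟧' = φ ≫ z₃ :=
    complete_distinguished_triangle_morphism _ _ hY hZ β₁ (𝟙 A₂) ((comp_id h₁).trans hβ₁.symm)
  refine ⟨Y, y, y', φ, hY, by rw [hφ₂, id_comp], ?_⟩
  rw [← assoc, hφ₃, assoc, hβ₂]

theorem todaFC_subset_todaFF {A₁ A₂ A₃ A₄ : C} (h₁ : A₁ ⟶ A₂) (h₂ : A₂ ⟶ A₃) (h₃ : A₃ ⟶ A₄) :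
    todaFC h₁ h₂ h₃ ⊆ todaFF h₁ h₂ h₃ := by
  rintro ψ ⟨Z, z₁, z₃, β₁, β₂, hZ, hβ₁, hβ₂, rfl⟩
  set e := shiftFunctorCompIsoId C (-1 : ℤ) 1 (by omega)
  set a : Z ⟶ A₄⟦(-1 : ℤ)⟧ := (shiftFunctor C (1 : ℤ)).preimage (β₂ ≫ e.inv.app A₄)
  have ha : a⟦(1 : ℤ)⟧' = β₂ ≫ e.inv.app A₄ := (shiftFunctor C (1 : ℤ)).map_preimage _
  obtain ⟨W, w, w', hW⟩ := distinguished_cocone_triangle₂ (h₃ ≫ e.inv.app A₄)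
  obtain ⟨γ, hγ₁, hγ₂⟩ : ∃ γ : A₂ ⟶ W, z₁ ≫ γ = a ≫ w ∧ h₂ ≫ 𝟙 A₃ = γ ≫ w' :=
    complete_distinguished_triangle_morphism₂ _ _ hZ hW a (𝟙 A₃)
      (by change z₃ ≫ a⟦(1 : ℤ)⟧' = 𝟙 A₃ ≫ h₃ ≫ e.inv.app A₄; rw [ha, ← assoc, hβ₂, id_comp])
  refine ⟨β₁ ≫ a, W, w, w', γ, ?_, hW, ?_, by rw [← hγ₂, comp_id]⟩
  · rw [Functor.map_comp, assoc, ha, assoc, e.inv_hom_id_app]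
    simp only [Functor.id_obj, comp_id]
  · rw [assoc, ← hγ₁, ← assoc, hβ₁]

/-- The fiber-cofiber Toda bracket is contained in the intersection of the iterated
cofiber and iterated fiber Toda brackets. -/
theorem todaFC_subset_todaCC_inter_todaFF
    {X₁ X₂ X₃ X₄ : C} (f₁ : X₁ ⟶ X₂) (f₂ : X₂ ⟶ X₃) (f₃ : X₃ ⟶ X₄) :
    todaFC f₁ f₂ f₃ ⊆ todaCC f₁ f₂ f₃ ∩ todaFF f₁ f₂ f₃ :=
  Set.subset_inter (todaFC_subset_todaCC f₁ f₂ f₃) (todaFC_subset_todaFF f₁ f₂ f₃)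
end

section
/- Let C be a pretriangulated category with shift Σ and let X₁ →f₁→ X₂ →f₂→ X₃ →f₃→ X₄ be a diagram in C with f₂ ∘ f₁ = 0 and f₃ ∘ f₂ = 0. Then the iterated cofiber Toda bracket ⟨f₃,f₂,f₁⟩cc is a coset of the indeterminacy subgroup G = f₃ ∘ Hom(ΣX₁, X₃) + Hom(ΣX₂, X₄) ∘ Σf₁ of the abelian group Hom(ΣX₁, X₄); that is, there exists ψ : ΣX₁ → X₄ with ⟨f₃,f₂,f₁⟩cc = ψ + G. (Part of the case n = 3 of the paper's Proposition 4.8; the proof uses only the pretriangulated axioms.) -/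
open CategoryTheory Category Limits Pretriangulated

variable {C : Type*} [Category C] [Preadditive C] [HasZeroObject C]
  [HasShift C ℤ] [∀ n : ℤ, (CategoryTheory.shiftFunctor C n).Additive] [Pretriangulated C]

/-!
Fix a cofiber sequence `X₁ → X₂ → Y → ΣX₁` of `f₁`. By TR3 every other cofiber of `f₁` receives
a map from `Y` compatible with the triangles, so every element of the bracket is witnessed on `Y`.
Two extensions `φ, φ'` of `f₂` along `y` differ by `y' ≫ h` (exactness at `Y`); the corresponding
`ψ, ψ'` then satisfy `y' ≫ (ψ' - ψ - h ≫ f₃) = 0`, so `ψ' - ψ - h ≫ f₃` factors through `Σf₁`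
(exactness at `ΣX₁`). Conversely `φ + y' ≫ h` witnesses `ψ + h ≫ f₃ + Σf₁ ≫ k`, and the bracket is
nonempty because `f₁ ≫ f₂ = 0` and `f₂ ≫ f₃ = 0`.
-/

open Preadditive

namespace CategoryTheory.Pretriangulated

lemma Triangle.yoneda_exact_shift₁ (T : Triangle C) (hT : T ∈ distTriang C) {X : C}
    (g : T.obj₁⟦(1:ℤ)⟧ ⟶ X) (hg : T.mor₃ ≫ g = 0) :
    ∃ k : T.obj₂⟦(1:ℤ)⟧ ⟶ X, g = T.mor₁⟦(1:ℤ)⟧' ≫ k := by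
  obtain ⟨k, hk⟩ : ∃ k : T.obj₂⟦(1:ℤ)⟧ ⟶ X, g = (-T.mor₁⟦(1:ℤ)⟧') ≫ k :=
    Triangle.yoneda_exact₃ _ (rot_of_distTriang _ hT) g hg
  exact ⟨-k, by rw [hk, neg_comp, comp_neg]⟩

end CategoryTheory.Pretriangulated

section

variable {X₁ X₂ X₃ X₄ Y : C} {f₁ : X₁ ⟶ X₂} {f₂ : X₂ ⟶ X₃} {f₃ : X₃ ⟶ X₄}
  {y : X₂ ⟶ Y} {y' : Y ⟶ X₁⟦(1:ℤ)⟧}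

lemma mem_todaCC_iff (hT : Triangle.mk f₁ y y' ∈ distTriang C) {ψ : X₁⟦(1:ℤ)⟧ ⟶ X₄} :
    ψ ∈ todaCC f₁ f₂ f₃ ↔ ∃ φ : Y ⟶ X₃, y ≫ φ = f₂ ∧ y' ≫ ψ = φ ≫ f₃ := by
  refine ⟨?_, fun ⟨φ, hφ, hψ⟩ => ⟨Y, y, y', φ, hT, hφ, hψ⟩⟩
  rintro ⟨Y₂, y₂, y₂', φ₂, hT₂, hφ₂, hψ₂⟩
  obtain ⟨c, hy, hy'⟩ : ∃ c : Y ⟶ Y₂, y ≫ c = 𝟙 X₂ ≫ y₂ ∧ y' ≫ (𝟙 X₁)⟦(1:ℤ)⟧' = c ≫ y₂' :=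
    complete_distinguished_triangle_morphism _ _ hT hT₂ (𝟙 X₁) (𝟙 X₂)
      ((comp_id f₁).trans (id_comp f₁).symm)
  rw [id_comp] at hy
  rw [CategoryTheory.Functor.map_id, comp_id] at hy'
  refine ⟨c ≫ φ₂, by rw [← hφ₂, ← hy, assoc], ?_⟩
  rw [hy', assoc, hψ₂, assoc]

lemma add_mem_todaCC {ψ : X₁⟦(1:ℤ)⟧ ⟶ X₄} (hψ : ψ ∈ todaCC f₁ f₂ f₃)
    (h : X₁⟦(1:ℤ)⟧ ⟶ X₃) (k : X₂⟦(1:ℤ)⟧ ⟶ X₄) :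
    ψ + (h ≫ f₃ + f₁⟦(1:ℤ)⟧' ≫ k) ∈ todaCC f₁ f₂ f₃ := by
  obtain ⟨Y, y, y', φ, hT, hφ, hψ⟩ := hψ
  have hyy' : y ≫ y' = 0 := comp_distTriang_mor_zero₂₃ _ hT
  have hy'f₁ : y' ≫ f₁⟦(1:ℤ)⟧' = 0 := comp_distTriang_mor_zero₃₁ _ hT
  refine ⟨Y, y, y', φ + y' ≫ h, hT, ?_, ?_⟩
  · rw [comp_add, reassoc_of% hyy', zero_comp, add_zero, hφ]
  · rw [comp_add, comp_add, reassoc_of% hy'f₁, zero_comp, add_zero, hψ, add_comp, assoc]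

lemma exists_eq_add_of_mem_todaCC {ψ χ : X₁⟦(1:ℤ)⟧ ⟶ X₄} (hψ : ψ ∈ todaCC f₁ f₂ f₃)
    (hχ : χ ∈ todaCC f₁ f₂ f₃) :
    ∃ (h : X₁⟦(1:ℤ)⟧ ⟶ X₃) (k : X₂⟦(1:ℤ)⟧ ⟶ X₄), χ = ψ + (h ≫ f₃ + f₁⟦(1:ℤ)⟧' ≫ k) := by
  obtain ⟨Y, y, y', φ, hT, hφ, hψ⟩ := hψ
  obtain ⟨φ', hφ', hχ⟩ := (mem_todaCC_iff hT).1 hχ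
  obtain ⟨h, hh⟩ : ∃ h, φ' - φ = y' ≫ h := Triangle.yoneda_exact₃ _ hT (φ' - φ)
    (show y ≫ (φ' - φ) = 0 by rw [comp_sub, hφ, hφ', sub_self])
  obtain ⟨k, hk⟩ : ∃ k, χ - ψ - h ≫ f₃ = f₁⟦(1:ℤ)⟧' ≫ k :=
    Triangle.yoneda_exact_shift₁ _ hT (χ - ψ - h ≫ f₃) (show y' ≫ (χ - ψ - h ≫ f₃) = 0 by
      rw [comp_sub, comp_sub, hχ, hψ, ← sub_comp, hh, assoc, sub_self])
  exact ⟨h, k, by rw [← hk]; abel⟩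

end

/-- The todaCC Toda bracket is a coset of the indeterminacy subgroup
`f₃ ∘ Hom(ΣX₁, X₃) + Hom(ΣX₂, X₄) ∘ Σf₁`. -/
theorem todaCC_is_coset
    {X₁ X₂ X₃ X₄ : C} (f₁ : X₁ ⟶ X₂) (f₂ : X₂ ⟶ X₃) (f₃ : X₃ ⟶ X₄)
    (h₁ : f₁ ≫ f₂ = 0) (h₂ : f₂ ≫ f₃ = 0) :
    ∃ ψ : X₁⟦(1:ℤ)⟧ ⟶ X₄,
      todaCC f₁ f₂ f₃ =
        {χ : X₁⟦(1:ℤ)⟧ ⟶ X₄ |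
          ∃ (h : X₁⟦(1:ℤ)⟧ ⟶ X₃) (k : X₂⟦(1:ℤ)⟧ ⟶ X₄),
            χ = ψ + (h ≫ f₃ + f₁⟦(1:ℤ)⟧' ≫ k)} := by
  obtain ⟨Y, y, y', hT⟩ := distinguished_cocone_triangle f₁
  obtain ⟨φ, hφ⟩ : ∃ φ : Y ⟶ X₃, f₂ = y ≫ φ := Triangle.yoneda_exact₂ _ hT f₂ h₁
  obtain ⟨ψ, hψ⟩ : ∃ ψ, φ ≫ f₃ = y' ≫ ψ := Triangle.yoneda_exact₃ _ hT (φ ≫ f₃)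
    (show y ≫ φ ≫ f₃ = 0 by rw [← assoc, ← hφ, h₂])
  have hψ_mem : ψ ∈ todaCC f₁ f₂ f₃ := ⟨Y, y, y', φ, hT, hφ.symm, hψ.symm⟩
  refine ⟨ψ, Set.ext fun χ => ⟨exists_eq_add_of_mem_todaCC hψ_mem, ?_⟩⟩
  rintro ⟨h, k, rfl⟩
  exact add_mem_todaCC hψ_mem h k
end

section
/- Let C be a pretriangulated category with shift Σ and let X₁ →f₁→ X₂ →f₂→ X₃ →f₃→ X₄ be a diagram in C with f₂ ∘ f₁ = 0 and f₃ ∘ f₂ = 0. Then the iterated fiber Toda bracket ⟨f₃,f₂,f₁⟩ff is a coset of the indeterminacy subgroup G = f₃ ∘ Hom(ΣX₁, X₃) + Hom(ΣX₂, X₄) ∘ Σf₁ of the abelian group Hom(ΣX₁, X₄); that is, there exists ψ : ΣX₁ → X₄ with ⟨f₃,f₂,f₁⟩ff = ψ + G. (Part of the case n = 3 of the paper's Proposition 4.8; the proof uses only the pretriangulated axioms.) -/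
/-! Through the additive, natural bijection `(X⟦1⟧ ⟶ Y) ≃ (X ⟶ Y⟦-1⟧)` of the shift adjunction
it suffices to work with `δ : X₁ ⟶ X₄⟦-1⟧`. Fix one fibre triangle `X₄⟦-1⟧ → W → X₃ → X₄` of `f₃`
and, by exactness, one witness `(δ₀, γ₀)`. Any other fibre triangle maps to the fixed one over the
identities, so every `δ` has a witness `γ` into `W`. Then `γ - γ₀` dies in `X₃`, so it is `k ≫ w`,
and `δ - δ₀ - f₁ ≫ k` dies in `W`, so by the inverse rotation it factors through `f₃⟦-1⟧'`.
Conversely `δ₀ + g ≫ f₃⟦-1⟧' + f₁ ≫ k` is witnessed by `γ₀ + k ≫ w`. -/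

open CategoryTheory Category Limits Pretriangulated

variable {C : Type*} [Category C] [Preadditive C] [HasZeroObject C]
  [HasShift C ℤ] [∀ n : ℤ, (CategoryTheory.shiftFunctor C n).Additive] [Pretriangulated C]

namespace CategoryTheory.Adjunction

variable {A B : Type*} [Category A] [Category B] [Preadditive A] [Preadditive B]
  {F : A ⥤ B} {G : B ⥤ A} (adj : F ⊣ G) [F.Additive]

lemma homEquiv_symm_add_comp_add_comp {X₁ X₂ : A} {X₃ X₄ : B} (f₁ : X₁ ⟶ X₂) (f₃ : X₃ ⟶ X₄)
    (δ₀ : X₁ ⟶ G.obj X₄) (g : X₁ ⟶ G.obj X₃) (k : X₂ ⟶ G.obj X₄) :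
    (adj.homEquiv X₁ X₄).symm (δ₀ + (g ≫ G.map f₃ + f₁ ≫ k)) =
      (adj.homEquiv X₁ X₄).symm δ₀ +
        ((adj.homEquiv X₁ X₃).symm g ≫ f₃ + F.map f₁ ≫ (adj.homEquiv X₂ X₄).symm k) := by
  simp only [← homAddEquiv_symm_apply, map_add]
  simp only [homAddEquiv_symm_apply]
  rw [homEquiv_naturality_right_symm, homEquiv_naturality_left_symm]

lemma homEquiv_symm_image_coset {X₁ X₂ : A} {X₃ X₄ : B} (f₁ : X₁ ⟶ X₂) (f₃ : X₃ ⟶ X₄)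
    (δ₀ : X₁ ⟶ G.obj X₄) :
    (adj.homEquiv X₁ X₄).symm ''
        {δ | ∃ (g : X₁ ⟶ G.obj X₃) (k : X₂ ⟶ G.obj X₄), δ = δ₀ + (g ≫ G.map f₃ + f₁ ≫ k)} =
      {χ | ∃ (h : F.obj X₁ ⟶ X₃) (k : F.obj X₂ ⟶ X₄),
        χ = (adj.homEquiv X₁ X₄).symm δ₀ + (h ≫ f₃ + F.map f₁ ≫ k)} := by
  ext χ
  constructor
  · rintro ⟨δ, ⟨g, k, rfl⟩, rfl⟩
    exact ⟨_, _, adj.homEquiv_symm_add_comp_add_comp f₁ f₃ δ₀ g k⟩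
  · rintro ⟨h, k, rfl⟩
    refine ⟨_, ⟨adj.homEquiv _ _ h, adj.homEquiv _ _ k, rfl⟩, ?_⟩
    simp only [homEquiv_symm_add_comp_add_comp, Equiv.symm_apply_apply]

end CategoryTheory.Adjunction

namespace CategoryTheory.Pretriangulated

def todaFFUnshifted {A₁ A₂ A₃ A₄ : C} (f₁ : A₁ ⟶ A₂) (f₂ : A₂ ⟶ A₃) (f₃ : A₃ ⟶ A₄) :
    Set (A₁ ⟶ A₄⟦(-1 : ℤ)⟧) :=
  {δ | ∃ (W : C) (w : A₄⟦(-1 : ℤ)⟧ ⟶ W) (w' : W ⟶ A₃) (γ : A₂ ⟶ W),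
    Triangle.mk w w' (f₃ ≫ (shiftFunctorCompIsoId C (-1 : ℤ) 1 (by omega)).inv.app A₄) ∈
      distTriang C ∧ δ ≫ w = f₁ ≫ γ ∧ γ ≫ w' = f₂}

lemma todaFF_eq_image_todaFFUnshifted {A₁ A₂ A₃ A₄ : C} (f₁ : A₁ ⟶ A₂) (f₂ : A₂ ⟶ A₃)
    (f₃ : A₃ ⟶ A₄) :
    todaFF f₁ f₂ f₃ =
      ((shiftEquiv C (1 : ℤ)).toAdjunction.homEquiv A₁ A₄).symm '' todaFFUnshifted f₁ f₂ f₃ := by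
  ext ψ
  constructor
  · rintro ⟨δ, W, w, w', γ, rfl, hT, hδ, hγ⟩
    exact ⟨δ, ⟨W, w, w', γ, hT, hδ, hγ⟩, rfl⟩
  · rintro ⟨δ, ⟨W, w, w', γ, hT, hδ, hγ⟩, rfl⟩
    exact ⟨δ, W, w, w', γ, rfl, hT, hδ, hγ⟩

section

variable {A₁ A₂ A₃ A₄ W : C} {w : A₄⟦(-1 : ℤ)⟧ ⟶ W} {w' : W ⟶ A₃} {f₃ : A₃ ⟶ A₄}

lemma comp_eq_zero_iff_exists_eq_comp_shift
    (hT : Triangle.mk w w' (f₃ ≫ (shiftFunctorCompIsoId C (-1 : ℤ) 1 (by omega)).inv.app A₄) ∈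
      distTriang C)
    {X : C} (δ : X ⟶ A₄⟦(-1 : ℤ)⟧) :
    δ ≫ w = 0 ↔ ∃ g : X ⟶ A₃⟦(-1 : ℤ)⟧, δ = g ≫ f₃⟦(-1 : ℤ)⟧' := by
  have hT' := inv_rot_of_distTriang _ hT
  have hmor₁ : (Triangle.mk w w'
      (f₃ ≫ (shiftFunctorCompIsoId C (-1 : ℤ) 1 (by omega)).inv.app A₄)).invRotate.mor₁ =
        -f₃⟦(-1 : ℤ)⟧' := by
    change -(f₃ ≫ (shiftFunctorCompIsoId C (-1 : ℤ) 1 (by omega)).inv.app A₄)⟦(-1 : ℤ)⟧' ≫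
      (shiftFunctorCompIsoId C (1 : ℤ) (-1) (by omega)).hom.app (A₄⟦(-1 : ℤ)⟧) = _
    rw [← shift_shiftFunctorCompIsoId_hom_app (-1 : ℤ) 1 (by omega), Functor.map_comp, assoc,
      ← Functor.map_comp, Iso.inv_hom_id_app]
    simp only [Functor.id_obj, Functor.map_id, comp_id]
  constructor
  · intro hδ
    obtain ⟨g, rfl⟩ := Triangle.coyoneda_exact₂ _ hT' δ hδ
    refine ⟨-g, ?_⟩
    rw [hmor₁]
    exact (Preadditive.comp_neg _ _).trans (Preadditive.neg_comp _ _).symm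
  · rintro ⟨g, rfl⟩
    have hzero : f₃⟦(-1 : ℤ)⟧' ≫ w = 0 := by
      have h := comp_distTriang_mor_zero₁₂ _ hT'
      rw [hmor₁] at h
      exact neg_eq_zero.mp ((Preadditive.neg_comp _ _).symm.trans h)
    rw [assoc, hzero, comp_zero]

variable {f₁ : A₁ ⟶ A₂} {f₂ : A₂ ⟶ A₃} {δ₀ : A₁ ⟶ A₄⟦(-1 : ℤ)⟧} {γ₀ : A₂ ⟶ W}

lemma add_mem_todaFFUnshifted
    (hT : Triangle.mk w w' (f₃ ≫ (shiftFunctorCompIsoId C (-1 : ℤ) 1 (by omega)).inv.app A₄) ∈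
      distTriang C)
    (hδ₀ : δ₀ ≫ w = f₁ ≫ γ₀) (hγ₀ : γ₀ ≫ w' = f₂) (g : A₁ ⟶ A₃⟦(-1 : ℤ)⟧)
    (k : A₂ ⟶ A₄⟦(-1 : ℤ)⟧) :
    δ₀ + (g ≫ f₃⟦(-1 : ℤ)⟧' + f₁ ≫ k) ∈ todaFFUnshifted f₁ f₂ f₃ := by
  have hf₃w : f₃⟦(-1 : ℤ)⟧' ≫ w = 0 :=
    (comp_eq_zero_iff_exists_eq_comp_shift hT _).2 ⟨𝟙 _, (id_comp _).symm⟩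
  have hww' : w ≫ w' = 0 := comp_distTriang_mor_zero₁₂ _ hT
  refine ⟨W, w, w', γ₀ + k ≫ w, hT, ?_, ?_⟩
  · rw [Preadditive.add_comp, Preadditive.add_comp, assoc, hf₃w, comp_zero, zero_add, hδ₀,
      assoc, Preadditive.comp_add]
  · rw [Preadditive.add_comp, assoc, hww', comp_zero, add_zero, hγ₀]

lemma exists_eq_add_of_mem_todaFFUnshifted
    (hT : Triangle.mk w w' (f₃ ≫ (shiftFunctorCompIsoId C (-1 : ℤ) 1 (by omega)).inv.app A₄) ∈
      distTriang C)
    (hδ₀ : δ₀ ≫ w = f₁ ≫ γ₀) (hγ₀ : γ₀ ≫ w' = f₂) {δ : A₁ ⟶ A₄⟦(-1 : ℤ)⟧}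
    (hδ : δ ∈ todaFFUnshifted f₁ f₂ f₃) :
    ∃ (g : A₁ ⟶ A₃⟦(-1 : ℤ)⟧) (k : A₂ ⟶ A₄⟦(-1 : ℤ)⟧),
      δ = δ₀ + (g ≫ f₃⟦(-1 : ℤ)⟧' + f₁ ≫ k) := by
  obtain ⟨W', v, v', γ, hT', hδγ, hγ⟩ := hδ
  obtain ⟨b, hb₁, hb₂⟩ : ∃ b : W' ⟶ W, v ≫ b = w ∧ v' = b ≫ w' := by
    obtain ⟨b, hb₁, hb₂⟩ := complete_distinguished_triangle_morphism₂ _ _ hT' hT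
      (𝟙 (A₄⟦(-1 : ℤ)⟧)) (𝟙 A₃)
      (((congrArg _ (Functor.map_id _ _)).trans (comp_id _)).trans (id_comp _).symm)
    exact ⟨b, hb₁.trans (id_comp w), (comp_id v').symm.trans hb₂⟩
  obtain ⟨k, hk⟩ : ∃ k : A₂ ⟶ A₄⟦(-1 : ℤ)⟧, γ ≫ b - γ₀ = k ≫ w :=
    Triangle.coyoneda_exact₂ _ hT _ (by
      change (γ ≫ b - γ₀) ≫ w' = 0
      rw [Preadditive.sub_comp, assoc, ← hb₂, hγ, hγ₀, sub_self])
  obtain ⟨g, hg⟩ := (comp_eq_zero_iff_exists_eq_comp_shift hT (δ - δ₀ - f₁ ≫ k)).1 (by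
    rw [Preadditive.sub_comp, Preadditive.sub_comp, assoc, ← hk, Preadditive.comp_sub, hδ₀, ← hb₁,
      ← assoc, hδγ, assoc, sub_self])
  exact ⟨g, k, by rw [← hg]; abel⟩

end

lemma exists_todaFFUnshifted_eq_coset {A₁ A₂ A₃ A₄ : C} {f₁ : A₁ ⟶ A₂} {f₂ : A₂ ⟶ A₃}
    {f₃ : A₃ ⟶ A₄} (h₁₂ : f₁ ≫ f₂ = 0) (h₂₃ : f₂ ≫ f₃ = 0) :
    ∃ δ₀ : A₁ ⟶ A₄⟦(-1 : ℤ)⟧, todaFFUnshifted f₁ f₂ f₃ =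
      {δ | ∃ (g : A₁ ⟶ A₃⟦(-1 : ℤ)⟧) (k : A₂ ⟶ A₄⟦(-1 : ℤ)⟧),
        δ = δ₀ + (g ≫ f₃⟦(-1 : ℤ)⟧' + f₁ ≫ k)} := by
  obtain ⟨W, w, w', hT⟩ := distinguished_cocone_triangle₂
    (f₃ ≫ (shiftFunctorCompIsoId C (-1 : ℤ) 1 (by omega)).inv.app A₄)
  obtain ⟨γ₀, hγ₀⟩ : ∃ γ₀ : A₂ ⟶ W, f₂ = γ₀ ≫ w' :=
    Triangle.coyoneda_exact₃ _ hT f₂ (by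
      change f₂ ≫ f₃ ≫ (shiftFunctorCompIsoId C (-1 : ℤ) 1 (by omega)).inv.app A₄ = 0
      rw [← assoc, h₂₃, zero_comp])
  obtain ⟨δ₀, hδ₀⟩ : ∃ δ₀ : A₁ ⟶ A₄⟦(-1 : ℤ)⟧, f₁ ≫ γ₀ = δ₀ ≫ w :=
    Triangle.coyoneda_exact₂ _ hT (f₁ ≫ γ₀) (by
      change (f₁ ≫ γ₀) ≫ w' = 0
      rw [assoc, ← hγ₀, h₁₂])
  refine ⟨δ₀, Set.ext fun δ ↦
    ⟨exists_eq_add_of_mem_todaFFUnshifted hT hδ₀.symm hγ₀.symm, ?_⟩⟩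
  rintro ⟨g, k, rfl⟩
  exact add_mem_todaFFUnshifted hT hδ₀.symm hγ₀.symm g k

end CategoryTheory.Pretriangulated

/-- The todaFF Toda bracket is a coset of the indeterminacy subgroup
`f₃ ∘ Hom(ΣX₁, X₃) + Hom(ΣX₂, X₄) ∘ Σf₁`. -/
theorem todaFF_is_coset
    {X₁ X₂ X₃ X₄ : C} (f₁ : X₁ ⟶ X₂) (f₂ : X₂ ⟶ X₃) (f₃ : X₃ ⟶ X₄)
    (h₁ : f₁ ≫ f₂ = 0) (h₂ : f₂ ≫ f₃ = 0) :
    ∃ ψ : X₁⟦(1:ℤ)⟧ ⟶ X₄,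
      todaFF f₁ f₂ f₃ =
        {χ : X₁⟦(1:ℤ)⟧ ⟶ X₄ |
          ∃ (h : X₁⟦(1:ℤ)⟧ ⟶ X₃) (k : X₂⟦(1:ℤ)⟧ ⟶ X₄),
            χ = ψ + (h ≫ f₃ + f₁⟦(1:ℤ)⟧' ≫ k)} := by
  obtain ⟨δ₀, hδ₀⟩ := exists_todaFFUnshifted_eq_coset h₁ h₂
  have : (shiftEquiv C (1 : ℤ)).functor.Additive :=
    inferInstanceAs (shiftFunctor C (1 : ℤ)).Additive
  refine ⟨((shiftEquiv C (1 : ℤ)).toAdjunction.homEquiv X₁ X₄).symm δ₀, ?_⟩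
  rw [todaFF_eq_image_todaFFUnshifted, hδ₀]
  exact (shiftEquiv C (1 : ℤ)).toAdjunction.homEquiv_symm_image_coset f₁ f₃ δ₀
end

section
/- Let C be a pretriangulated category with shift Σ and let X₁ →f₁→ X₂ →f₂→ X₃ →f₃→ X₄ be a diagram in C with f₂ ∘ f₁ = 0 and f₃ ∘ f₂ = 0. Then the fiber-cofiber Toda bracket ⟨f₃,f₂,f₁⟩fc is a coset of the indeterminacy subgroup G = f₃ ∘ Hom(ΣX₁, X₃) + Hom(ΣX₂, X₄) ∘ Σf₁ of the abelian group Hom(ΣX₁, X₄); that is, there exists ψ : ΣX₁ → X₄ with ⟨f₃,f₂,f₁⟩fc = ψ + G. (Part of the case n = 3 of the paper's Proposition 4.8; the proof uses only the pretriangulated axioms.) -/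
open CategoryTheory Category Limits Pretriangulated

variable {C : Type*} [Category C] [Preadditive C] [HasZeroObject C]
  [HasShift C ℤ] [∀ n : ℤ, (CategoryTheory.shiftFunctor C n).Additive] [Pretriangulated C]

/-!
Fix one distinguished triangle `Z → X₂ → X₃ → ΣZ` on `f₂`. Every triangle on `f₂` is isomorphic
to it over `f₂`, so the bracket consists of the composites `Σβ₁ ≫ β₂` of lifts `β₁` of `f₁`
through `Z → X₂` and extensions `β₂` of `f₃` through `X₃ → ΣZ`. By exactness, after shifting, two
lifts differ by something factoring through `X₃ → ΣZ`, and two extensions by something factoring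
through `ΣZ → ΣX₂`; since `X₃ → ΣZ → ΣX₂` is zero, the cross term vanishes and the differences
contribute exactly `h ≫ f₃ + Σf₁ ≫ k`.
-/

section

variable {T : Triangle C} (hT : T ∈ distTriang C)
include hT

lemma comp_mor₁_eq_comp_mor₁_iff_of_distTriang {X : C} {α β : X ⟶ T.obj₁} :
    α ≫ T.mor₁ = β ≫ T.mor₁ ↔
      ∃ e : X⟦(1:ℤ)⟧ ⟶ T.obj₃, α⟦(1:ℤ)⟧' = β⟦(1:ℤ)⟧' + e ≫ T.mor₃ := by
  constructor
  · intro h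
    obtain ⟨e, he⟩ := T.coyoneda_exact₁ hT (α⟦(1:ℤ)⟧' - β⟦(1:ℤ)⟧') (by
      rw [Preadditive.sub_comp, ← Functor.map_comp, ← Functor.map_comp, h, sub_self])
    exact ⟨e, eq_add_of_sub_eq' he⟩
  · rintro ⟨e, he⟩
    apply (shiftFunctor C (1:ℤ)).map_injective
    rw [Functor.map_comp, Functor.map_comp, he, Preadditive.add_comp, assoc,
      comp_distTriang_mor_zero₃₁ T hT, comp_zero, add_zero]

lemma mor₃_comp_eq_mor₃_comp_iff_of_distTriang {Y : C} {v w : T.obj₁⟦(1:ℤ)⟧ ⟶ Y} :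
    T.mor₃ ≫ v = T.mor₃ ≫ w ↔ ∃ k : T.obj₂⟦(1:ℤ)⟧ ⟶ Y, v = w + T.mor₁⟦(1:ℤ)⟧' ≫ k := by
  constructor
  · intro h
    obtain ⟨k, hk⟩ : ∃ k : T.obj₂⟦(1:ℤ)⟧ ⟶ Y, v - w = (-T.mor₁⟦(1:ℤ)⟧') ≫ k :=
      T.rotate.yoneda_exact₃ (rot_of_distTriang _ hT) (v - w) (by
        change T.mor₃ ≫ (v - w) = 0
        rw [Preadditive.comp_sub, h, sub_self])
    refine ⟨-k, eq_add_of_sub_eq' ?_⟩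
    rw [hk, Preadditive.neg_comp, Preadditive.comp_neg]
  · rintro ⟨k, rfl⟩
    rw [Preadditive.comp_add, comp_distTriang_mor_zero₃₁_assoc T hT, zero_comp, add_zero]

lemma shift_add_comp_add_eq_of_distTriang {X Y : C} {β : X ⟶ T.obj₁} {w : T.obj₁⟦(1:ℤ)⟧ ⟶ Y}
    {f : X ⟶ T.obj₂} {g : T.obj₃ ⟶ Y} (hβ : β ≫ T.mor₁ = f) (hw : T.mor₃ ≫ w = g)
    (e : X⟦(1:ℤ)⟧ ⟶ T.obj₃) (k : T.obj₂⟦(1:ℤ)⟧ ⟶ Y) :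
    (β⟦(1:ℤ)⟧' + e ≫ T.mor₃) ≫ (w + T.mor₁⟦(1:ℤ)⟧' ≫ k) =
      β⟦(1:ℤ)⟧' ≫ w + (e ≫ g + f⟦(1:ℤ)⟧' ≫ k) := by
  simp only [Preadditive.add_comp, Preadditive.comp_add, assoc,
    comp_distTriang_mor_zero₃₁_assoc T hT, zero_comp, comp_zero, ← hβ, ← hw, Functor.map_comp]
  abel

end

lemma exists_iso_of_distTriang_of_mor₂_eq {X₂ X₃ Z Z' : C} {f : X₂ ⟶ X₃}
    {z₁ : Z ⟶ X₂} {z₃ : X₃ ⟶ Z⟦(1:ℤ)⟧} {z₁' : Z' ⟶ X₂} {z₃' : X₃ ⟶ Z'⟦(1:ℤ)⟧}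
    (hT : Triangle.mk z₁ f z₃ ∈ distTriang C) (hT' : Triangle.mk z₁' f z₃' ∈ distTriang C) :
    ∃ a : Z' ≅ Z, a.hom ≫ z₁ = z₁' ∧ z₃' ≫ a.hom⟦(1:ℤ)⟧' = z₃ := by
  obtain ⟨a, ha₁, ha₃⟩ : ∃ a : Z' ⟶ Z, z₁' ≫ 𝟙 X₂ = a ≫ z₁ ∧ z₃' ≫ a⟦(1:ℤ)⟧' = 𝟙 X₃ ≫ z₃ :=
    complete_distinguished_triangle_morphism₁ _ _ hT' hT (𝟙 X₂) (𝟙 X₃)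
      ((comp_id f).trans (id_comp f).symm)
  have : IsIso a := isIso₁_of_isIso₂₃
    (Triangle.homMk (Triangle.mk z₁' f z₃') (Triangle.mk z₁ f z₃) a (𝟙 X₂) (𝟙 X₃)
      ha₁ ((comp_id f).trans (id_comp f).symm) ha₃) hT' hT
    (IsIso.id X₂) (IsIso.id X₃)
  exact ⟨asIso a, by simpa using ha₁.symm, by simpa using ha₃⟩

lemma mem_todaFC_iff_of_distTriang {X₁ X₂ X₃ X₄ Z : C} {f₁ : X₁ ⟶ X₂} {f₂ : X₂ ⟶ X₃}
    {f₃ : X₃ ⟶ X₄} {z₁ : Z ⟶ X₂} {z₃ : X₃ ⟶ Z⟦(1:ℤ)⟧}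
    (hT : Triangle.mk z₁ f₂ z₃ ∈ distTriang C) {ψ : X₁⟦(1:ℤ)⟧ ⟶ X₄} :
    ψ ∈ todaFC f₁ f₂ f₃ ↔ ∃ (β₁ : X₁ ⟶ Z) (β₂ : Z⟦(1:ℤ)⟧ ⟶ X₄),
      β₁ ≫ z₁ = f₁ ∧ z₃ ≫ β₂ = f₃ ∧ ψ = β₁⟦(1:ℤ)⟧' ≫ β₂ := by
  constructor
  · rintro ⟨Z', z₁', z₃', β₁, β₂, hT', rfl, rfl, rfl⟩
    obtain ⟨a, ha₁, ha₃⟩ := exists_iso_of_distTriang_of_mor₂_eq hT hT'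
    exact ⟨β₁ ≫ a.hom, a.inv⟦(1:ℤ)⟧' ≫ β₂, by rw [assoc, ha₁], by simp [← ha₃], by simp⟩
  · rintro ⟨β₁, β₂, h₁, h₃, rfl⟩
    exact ⟨Z, z₁, z₃, β₁, β₂, hT, h₁, h₃, rfl⟩

/-- The todaFC Toda bracket is a coset of the indeterminacy subgroup
`f₃ ∘ Hom(ΣX₁, X₃) + Hom(ΣX₂, X₄) ∘ Σf₁`. -/
theorem todaFC_is_coset
    {X₁ X₂ X₃ X₄ : C} (f₁ : X₁ ⟶ X₂) (f₂ : X₂ ⟶ X₃) (f₃ : X₃ ⟶ X₄)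
    (h₁ : f₁ ≫ f₂ = 0) (h₂ : f₂ ≫ f₃ = 0) :
    ∃ ψ : X₁⟦(1:ℤ)⟧ ⟶ X₄,
      todaFC f₁ f₂ f₃ =
        {χ : X₁⟦(1:ℤ)⟧ ⟶ X₄ |
          ∃ (h : X₁⟦(1:ℤ)⟧ ⟶ X₃) (k : X₂⟦(1:ℤ)⟧ ⟶ X₄),
            χ = ψ + (h ≫ f₃ + f₁⟦(1:ℤ)⟧' ≫ k)} := by
  obtain ⟨Z, z₁, z₃, hT⟩ := distinguished_cocone_triangle₁ f₂
  obtain ⟨β₁, hβ₁⟩ : ∃ β₁ : X₁ ⟶ Z, f₁ = β₁ ≫ z₁ :=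
    (Triangle.mk z₁ f₂ z₃).coyoneda_exact₂ hT f₁ h₁
  obtain ⟨β₂, hβ₂⟩ : ∃ β₂ : Z⟦(1:ℤ)⟧ ⟶ X₄, f₃ = z₃ ≫ β₂ :=
    (Triangle.mk z₁ f₂ z₃).yoneda_exact₃ hT f₃ h₂
  refine ⟨β₁⟦(1:ℤ)⟧' ≫ β₂, Set.ext fun χ => ?_⟩
  rw [mem_todaFC_iff_of_distTriang hT]
  constructor
  · rintro ⟨α, v, hα, hv, rfl⟩
    obtain ⟨h, hh⟩ : ∃ h : X₁⟦(1:ℤ)⟧ ⟶ X₃, α⟦(1:ℤ)⟧' = β₁⟦(1:ℤ)⟧' + h ≫ z₃ :=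
      (comp_mor₁_eq_comp_mor₁_iff_of_distTriang hT).1 (hα.trans hβ₁)
    obtain ⟨k, hk⟩ : ∃ k : X₂⟦(1:ℤ)⟧ ⟶ X₄, v = β₂ + z₁⟦(1:ℤ)⟧' ≫ k :=
      (mor₃_comp_eq_mor₃_comp_iff_of_distTriang hT).1 (hv.trans hβ₂)
    refine ⟨h, k, ?_⟩
    rw [hh, hk]
    exact shift_add_comp_add_eq_of_distTriang hT hβ₁.symm hβ₂.symm h k
  · rintro ⟨h, k, rfl⟩
    let α := (shiftFunctor C (1:ℤ)).preimage (β₁⟦(1:ℤ)⟧' + h ≫ z₃)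
    have hα : α⟦(1:ℤ)⟧' = β₁⟦(1:ℤ)⟧' + h ≫ z₃ := Functor.map_preimage _ _
    refine ⟨α, β₂ + z₁⟦(1:ℤ)⟧' ≫ k, ?_, ?_, ?_⟩
    · rw [hβ₁]; exact (comp_mor₁_eq_comp_mor₁_iff_of_distTriang hT).2 ⟨h, hα⟩
    · rw [hβ₂]; exact (mor₃_comp_eq_mor₃_comp_iff_of_distTriang hT).2 ⟨k, rfl⟩
    · rw [hα]
      exact (shift_add_comp_add_eq_of_distTriang hT hβ₁.symm hβ₂.symm h k).symm
end

section
/- Let C be a pretriangulated category with shift Σ and let X₁ →f₁→ X₂ →f₂→ X₃ →f₃→ X₄ be a diagram in C with f₂ ∘ f₁ = 0 and f₃ ∘ f₂ = 0. Then the three Toda brackets coincide: ⟨f₃,f₂,f₁⟩ff = ⟨f₃,f₂,f₁⟩fc = ⟨f₃,f₂,f₁⟩cc as subsets of Hom(ΣX₁, X₄). (This is the case n = 3 of the paper's main Theorem 4.9; unlike earlier proofs, the paper's proof works in any pretriangulated category, without the octahedral axiom.) -/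
/-!
Everything is compared with the fiber-cofiber bracket, built on a fiber triangle
`Z → X₂ → X₃ → Z⟦1⟧` of `f₂`. An element `β₁⟦1⟧' ≫ β₂` of it lies in the other two brackets:
extend `(β₁, 𝟙)`, resp. `(α, 𝟙)` with `β₂` desuspended to `α`, to a morphism of distinguished
triangles (TR3). Conversely, TR3 produces from an element of `cc` (resp. `ff`) an element of `fc`
differing from it by `f₁⟦1⟧' ≫ g` (resp. `g ≫ f₃`), by exactness of `Hom` on a distinguished
triangle. Such differences are absorbed by `fc` itself: add `z₁⟦1⟧' ≫ g` to `β₂` (resp. the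
desuspension of `g ≫ z₃` to `β₁`); this is harmless because `z₃ ≫ z₁⟦1⟧' = 0`.
-/

open CategoryTheory Category Limits Pretriangulated

variable {C : Type*} [Category C] [Preadditive C] [HasZeroObject C]
  [HasShift C ℤ] [∀ n : ℤ, (CategoryTheory.shiftFunctor C n).Additive] [Pretriangulated C]

section TodaBrackets

variable {X₁ X₂ X₃ X₄ : C} {f₁ : X₁ ⟶ X₂} {f₂ : X₂ ⟶ X₃} {f₃ : X₃ ⟶ X₄}

lemma add_shift_map_comp_mem_todaFC {ψ : X₁⟦(1:ℤ)⟧ ⟶ X₄} (hψ : ψ ∈ todaFC f₁ f₂ f₃)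
    (g : X₂⟦(1:ℤ)⟧ ⟶ X₄) : ψ + f₁⟦(1:ℤ)⟧' ≫ g ∈ todaFC f₁ f₂ f₃ := by
  obtain ⟨Z, z₁, z₃, β₁, β₂, hT, hβ₁, hβ₂, rfl⟩ := hψ
  have hz : z₃ ≫ z₁⟦(1:ℤ)⟧' = 0 := comp_distTriang_mor_zero₃₁ _ hT
  refine ⟨Z, z₁, z₃, β₁, β₂ + z₁⟦(1:ℤ)⟧' ≫ g, hT, hβ₁, ?_, ?_⟩
  · rw [Preadditive.comp_add, hβ₂, reassoc_of% hz, zero_comp, add_zero]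
  · rw [Preadditive.comp_add, ← Functor.map_comp_assoc, hβ₁]

lemma add_comp_mem_todaFC {ψ : X₁⟦(1:ℤ)⟧ ⟶ X₄} (hψ : ψ ∈ todaFC f₁ f₂ f₃)
    (g : X₁⟦(1:ℤ)⟧ ⟶ X₃) : ψ + g ≫ f₃ ∈ todaFC f₁ f₂ f₃ := by
  obtain ⟨Z, z₁, z₃, β₁, β₂, hT, hβ₁, hβ₂, rfl⟩ := hψ
  have hz : z₃ ≫ z₁⟦(1:ℤ)⟧' = 0 := comp_distTriang_mor_zero₃₁ _ hT
  set κ := (shiftFunctor C (1:ℤ)).preimage (g ≫ z₃)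
  have hκ : κ ≫ z₁ = 0 := (shiftFunctor C (1:ℤ)).map_injective <| by simp [κ, hz]
  refine ⟨Z, z₁, z₃, β₁ + κ, β₂, hT, by rw [Preadditive.add_comp, hβ₁, hκ, add_zero], hβ₂, ?_⟩
  simp [κ, hβ₂]

lemma todaFC_subset_todaCC_s9 : todaFC f₁ f₂ f₃ ⊆ todaCC f₁ f₂ f₃ := by
  rintro ψ ⟨Z, z₁, z₃, β₁, β₂, hT, hβ₁, hβ₂, rfl⟩
  obtain ⟨Y, y, y', hY⟩ := distinguished_cocone_triangle f₁
  obtain ⟨φ, hφ₁, hφ₂⟩ : ∃ φ : Y ⟶ X₃, y ≫ φ = 𝟙 X₂ ≫ f₂ ∧ y' ≫ β₁⟦(1:ℤ)⟧' = φ ≫ z₃ :=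
    complete_distinguished_triangle_morphism _ _ hY hT β₁ (𝟙 X₂) ((comp_id f₁).trans hβ₁.symm)
  refine ⟨Y, y, y', φ, hY, hφ₁.trans (id_comp f₂), ?_⟩
  rw [← assoc, hφ₂, assoc, hβ₂]

lemma todaFC_subset_todaFF_s9 : todaFC f₁ f₂ f₃ ⊆ todaFF f₁ f₂ f₃ := by
  rintro ψ ⟨Z, z₁, z₃, β₁, β₂, hT, hβ₁, hβ₂, rfl⟩
  obtain ⟨α, rfl⟩ : ∃ α : Z ⟶ X₄⟦(-1:ℤ)⟧,
      α⟦(1:ℤ)⟧' ≫ (shiftFunctorCompIsoId C (-1) 1 (by omega)).hom.app X₄ = β₂ :=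
    ⟨(shiftFunctor C (1:ℤ)).preimage
      (β₂ ≫ (shiftFunctorCompIsoId C (-1) 1 (by omega)).inv.app X₄), by simp⟩
  obtain ⟨W, w, w', hW⟩ := distinguished_cocone_triangle₂
    (f₃ ≫ (shiftFunctorCompIsoId C (-1) 1 (by omega)).inv.app X₄)
  obtain ⟨γ, hγ₁, hγ₂⟩ : ∃ γ : X₂ ⟶ W, z₁ ≫ γ = α ≫ w ∧ f₂ ≫ 𝟙 X₃ = γ ≫ w' :=
    complete_distinguished_triangle_morphism₂ _ _ hT hW α (𝟙 X₃) (by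
      change z₃ ≫ α⟦(1:ℤ)⟧' = 𝟙 X₃ ≫ f₃ ≫ _
      rw [id_comp, ← hβ₂]
      simp)
  refine ⟨β₁ ≫ α, W, w, w', γ, by simp, hW, ?_, ((comp_id f₂).symm.trans hγ₂).symm⟩
  rw [assoc, ← hγ₁, ← assoc, hβ₁]

lemma todaCC_subset_todaFC (h₂ : f₂ ≫ f₃ = 0) : todaCC f₁ f₂ f₃ ⊆ todaFC f₁ f₂ f₃ := by
  rintro ψ ⟨Y, y, y', φ, hY, hφ₁, hφ₂⟩
  obtain ⟨Z, z₁, z₃, hT⟩ := distinguished_cocone_triangle₁ f₂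
  obtain ⟨β₁, hβ₁, hβ₁'⟩ : ∃ β₁ : X₁ ⟶ Z, f₁ ≫ 𝟙 X₂ = β₁ ≫ z₁ ∧ y' ≫ β₁⟦(1:ℤ)⟧' = φ ≫ z₃ :=
    complete_distinguished_triangle_morphism₁ _ _ hY hT (𝟙 X₂) φ (hφ₁.trans (id_comp f₂).symm)
  obtain ⟨β₂, hβ₂⟩ : ∃ β₂ : Z⟦(1:ℤ)⟧ ⟶ X₄, f₃ = z₃ ≫ β₂ := Triangle.yoneda_exact₃ _ hT f₃ h₂
  have hψ₀ : β₁⟦(1:ℤ)⟧' ≫ β₂ ∈ todaFC f₁ f₂ f₃ :=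
    ⟨Z, z₁, z₃, β₁, β₂, hT, ((comp_id f₁).symm.trans hβ₁).symm, hβ₂.symm, rfl⟩
  have hψ₁ : y' ≫ (ψ - β₁⟦(1:ℤ)⟧' ≫ β₂) = 0 := by
    rw [Preadditive.comp_sub, hφ₂, reassoc_of% hβ₁', hβ₂, sub_self]
  obtain ⟨g, hg⟩ : ∃ g : X₂⟦(1:ℤ)⟧ ⟶ X₄, ψ - β₁⟦(1:ℤ)⟧' ≫ β₂ = (-f₁⟦(1:ℤ)⟧') ≫ g :=
    Triangle.yoneda_exact₃ _ (rot_of_distTriang _ hY) _ hψ₁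
  convert add_shift_map_comp_mem_todaFC hψ₀ (-g) using 1
  rw [Preadditive.comp_neg, ← Preadditive.neg_comp, ← hg, add_sub_cancel]

lemma todaFF_subset_todaFC (h₁ : f₁ ≫ f₂ = 0) : todaFF f₁ f₂ f₃ ⊆ todaFC f₁ f₂ f₃ := by
  rintro ψ ⟨δ, W, w, w', γ, rfl, hW, hδ, hγ⟩
  obtain ⟨Z, z₁, z₃, hT⟩ := distinguished_cocone_triangle₁ f₂
  obtain ⟨α, hα, hα'⟩ : ∃ α : Z ⟶ X₄⟦(-1:ℤ)⟧, z₁ ≫ γ = α ≫ w ∧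
      z₃ ≫ α⟦(1:ℤ)⟧' = 𝟙 X₃ ≫ f₃ ≫ (shiftFunctorCompIsoId C (-1) 1 (by omega)).inv.app X₄ :=
    complete_distinguished_triangle_morphism₁ _ _ hT hW γ (𝟙 X₃) ((comp_id f₂).trans hγ.symm)
  obtain ⟨β₁, hβ₁⟩ : ∃ β₁ : X₁ ⟶ Z, f₁ = β₁ ≫ z₁ := Triangle.coyoneda_exact₂ _ hT f₁ h₁
  set β₂ : Z⟦(1:ℤ)⟧ ⟶ X₄ := α⟦(1:ℤ)⟧' ≫ (shiftFunctorCompIsoId C (-1) 1 (by omega)).hom.app X₄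
  have hψ₀ : β₁⟦(1:ℤ)⟧' ≫ β₂ ∈ todaFC f₁ f₂ f₃ :=
    ⟨Z, z₁, z₃, β₁, β₂, hT, hβ₁.symm, by simp [β₂, reassoc_of% hα'], rfl⟩
  have hδ₁ : (δ - β₁ ≫ α) ≫ w = 0 := by
    rw [Preadditive.sub_comp, hδ, assoc, ← hα, hβ₁, assoc, sub_self]
  obtain ⟨g, hg⟩ : ∃ g : X₁⟦(1:ℤ)⟧ ⟶ X₃, (δ - β₁ ≫ α)⟦(1:ℤ)⟧' =
      g ≫ f₃ ≫ (shiftFunctorCompIsoId C (-1) 1 (by omega)).inv.app X₄ :=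
    Triangle.coyoneda_exact₁ _ hW _ (by
      change _ ≫ w⟦(1:ℤ)⟧' = 0
      rw [← Functor.map_comp, hδ₁, Functor.map_zero])
  have hψ : δ⟦(1:ℤ)⟧' ≫ (shiftFunctorCompIsoId C (-1) 1 (by omega)).hom.app X₄ =
      β₁⟦(1:ℤ)⟧' ≫ β₂ + g ≫ f₃ := by
    rw [← sub_eq_iff_eq_add']
    simp only [β₂, ← Functor.map_comp_assoc, ← Preadditive.sub_comp, ← Functor.map_sub, hg]
    simp
  exact hψ ▸ add_comp_mem_todaFC hψ₀ g

end TodaBrackets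

/-- The three Toda brackets coincide when consecutive composites vanish. -/
theorem todaFF_eq_todaFC_eq_todaCC
    {X₁ X₂ X₃ X₄ : C} (f₁ : X₁ ⟶ X₂) (f₂ : X₂ ⟶ X₃) (f₃ : X₃ ⟶ X₄)
    (h₁ : f₁ ≫ f₂ = 0) (h₂ : f₂ ≫ f₃ = 0) :
    todaFF f₁ f₂ f₃ = todaFC f₁ f₂ f₃ ∧ todaFC f₁ f₂ f₃ = todaCC f₁ f₂ f₃ :=
  ⟨(todaFF_subset_todaFC h₁).antisymm todaFC_subset_todaFF_s9,
    todaFC_subset_todaCC_s9.antisymm (todaCC_subset_todaFC h₂)⟩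
end

section
/- Let C be a pretriangulated category with shift Σ, let X₁ →f₁→ X₂ →f₂→ X₃ →f₃→ X₄ be a diagram in C, and let f₃' : X₃ → X₄ be another morphism, such that f₂ ∘ f₁ = 0, f₃ ∘ f₂ = 0 and f₃' ∘ f₂ = 0. Then ⟨f₃ + f₃', f₂, f₁⟩ ⊆ ⟨f₃, f₂, f₁⟩ + ⟨f₃', f₂, f₁⟩, where + on the right denotes the set of sums of one element from each bracket. (This is the case n = 3 of the paper's subadditivity Proposition 6.3(1); the proof uses only the pretriangulated axioms.) -/
open CategoryTheory Category Limits Pretriangulated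

variable {C : Type*} [Category C] [Preadditive C] [HasZeroObject C]
  [HasShift C ℤ] [∀ n : ℤ, (CategoryTheory.shiftFunctor C n).Additive] [Pretriangulated C]

/- Once an extension `φ` of `h₂` over the cofiber of `h₁` is fixed, the condition
`y' ≫ ψ = φ ≫ h₃` is additive in `(ψ, h₃)`; since `h₂ ≫ h₃ = 0`, the morphism `φ ≫ h₃`
factors through `y'`, which splits off an element of `⟨h₃, h₂, h₁⟩` built on the same `φ`. -/

section

variable {A₁ A₂ A₃ A₄ Y : C} {h₁ : A₁ ⟶ A₂} {h₂ : A₂ ⟶ A₃} {y : A₂ ⟶ Y}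
  {y' : Y ⟶ A₁⟦(1:ℤ)⟧} {φ : Y ⟶ A₃}

lemma exists_comp_eq_of_extension (hT : Triangle.mk h₁ y y' ∈ distTriang C)
    (hφ : y ≫ φ = h₂) {h₃ : A₃ ⟶ A₄} (h : h₂ ≫ h₃ = 0) :
    ∃ a : A₁⟦(1:ℤ)⟧ ⟶ A₄, y' ≫ a = φ ≫ h₃ := by
  obtain ⟨a, ha⟩ := Triangle.yoneda_exact₃ _ hT (φ ≫ h₃)
    (show y ≫ φ ≫ h₃ = 0 by rw [reassoc_of% hφ, h])
  exact ⟨a, ha.symm⟩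

lemma sub_mem_todaCC_of_extension (hT : Triangle.mk h₁ y y' ∈ distTriang C)
    (hφ : y ≫ φ = h₂) {h₃ h₃' : A₃ ⟶ A₄} {ψ a : A₁⟦(1:ℤ)⟧ ⟶ A₄}
    (hψ : y' ≫ ψ = φ ≫ (h₃ + h₃')) (ha : y' ≫ a = φ ≫ h₃) :
    ψ - a ∈ todaCC h₁ h₂ h₃' :=
  ⟨Y, y, y', φ, hT, hφ, by rw [Preadditive.comp_sub, hψ, ha, Preadditive.comp_add,
    add_sub_cancel_left]⟩

end

theorem todaBracket_subadd_last_general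
    {X₁ X₂ X₃ X₄ : C} (f₁ : X₁ ⟶ X₂) (f₂ : X₂ ⟶ X₃) (f₃ f₃' : X₃ ⟶ X₄)
    (h₂ : f₂ ≫ f₃ = 0) :
    todaCC f₁ f₂ (f₃ + f₃') ⊆
      {ψ : X₁⟦(1:ℤ)⟧ ⟶ X₄ |
        ∃ a ∈ todaCC f₁ f₂ f₃, ∃ b ∈ todaCC f₁ f₂ f₃', ψ = a + b} := by
  rintro ψ ⟨Y, y, y', φ, hT, hφ, hψ⟩
  obtain ⟨a, ha⟩ := exists_comp_eq_of_extension hT hφ h₂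
  exact ⟨a, ⟨Y, y, y', φ, hT, hφ, ha⟩, ψ - a, sub_mem_todaCC_of_extension hT hφ hψ ha,
    (add_sub_cancel a ψ).symm⟩

/-- Subadditivity of the Toda bracket in the last variable. -/
theorem todaBracket_subadd_last
    {X₁ X₂ X₃ X₄ : C} (f₁ : X₁ ⟶ X₂) (f₂ : X₂ ⟶ X₃) (f₃ f₃' : X₃ ⟶ X₄)
    (h₁ : f₁ ≫ f₂ = 0) (h₂ : f₂ ≫ f₃ = 0) (h₂' : f₂ ≫ f₃' = 0) :
    todaCC f₁ f₂ (f₃ + f₃') ⊆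
      {ψ : X₁⟦(1:ℤ)⟧ ⟶ X₄ |
        ∃ a ∈ todaCC f₁ f₂ f₃, ∃ b ∈ todaCC f₁ f₂ f₃', ψ = a + b} :=
  todaBracket_subadd_last_general f₁ f₂ f₃ f₃' h₂
end

section
/- Let C be a pretriangulated category with shift Σ, let X₁ →f₁→ X₂ →f₂→ X₃ →f₃→ X₄ be a diagram in C, and let f₁' : X₁ → X₂ be another morphism, such that f₂ ∘ f₁ = 0, f₂ ∘ f₁' = 0 and f₃ ∘ f₂ = 0. Then ⟨f₃, f₂, f₁ + f₁'⟩ ⊆ ⟨f₃, f₂, f₁⟩ + ⟨f₃, f₂, f₁'⟩, where + on the right denotes the set of sums of one element from each bracket. (This is the case n = 3 of the paper's subadditivity Proposition 6.3(2); the proof uses only the pretriangulated axioms.) -/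
open CategoryTheory Category Limits Pretriangulated

variable {C : Type*} [Category C] [Preadditive C] [HasZeroObject C]
  [HasShift C ℤ] [∀ n : ℤ, (CategoryTheory.shiftFunctor C n).Additive] [Pretriangulated C]

/-!
Fix a distinguished triangle `Z ⟶ X₂ ⟶ X₃ ⟶ Z⟦1⟧` on `f₂`. The elements of `⟨f₃, f₂, g⟩cc` are
exactly the composites `β⟦1⟧' ≫ β₂` where `β : X₁ ⟶ Z` lifts `g` and `β₂ : Z⟦1⟧ ⟶ X₄` extends
`f₃`. Write an element of `⟨f₃, f₂, f₁ + f₁'⟩cc` in this form and pick a lift `βa` of `f₁`, which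
exists since `f₁ ≫ f₂ = 0`. Then `β - βa` lifts `f₁'`, and the element splits as
`βa⟦1⟧' ≫ β₂ + (β - βa)⟦1⟧' ≫ β₂`.
-/

lemma mem_todaCC_of_distTriang {A₁ A₂ A₃ A₄ Z : C} {h₁ : A₁ ⟶ A₂} {h₂ : A₂ ⟶ A₃}
    {h₃ : A₃ ⟶ A₄} {z₁ : Z ⟶ A₂} {z₃ : A₃ ⟶ Z⟦(1:ℤ)⟧}
    (hTz : Triangle.mk z₁ h₂ z₃ ∈ distTriang C) (β₁ : A₁ ⟶ Z) (β₂ : Z⟦(1:ℤ)⟧ ⟶ A₄)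
    (hβ₁ : β₁ ≫ z₁ = h₁) (hβ₂ : z₃ ≫ β₂ = h₃) :
    β₁⟦(1:ℤ)⟧' ≫ β₂ ∈ todaCC h₁ h₂ h₃ := by
  obtain ⟨Y, y, y', hT⟩ := distinguished_cocone_triangle h₁
  obtain ⟨φ, hφ₁, hφ₂⟩ : ∃ φ : Y ⟶ A₃, y ≫ φ = 𝟙 A₂ ≫ h₂ ∧ y' ≫ β₁⟦(1:ℤ)⟧' = φ ≫ z₃ :=
    complete_distinguished_triangle_morphism _ _ hT hTz β₁ (𝟙 A₂) ((comp_id h₁).trans hβ₁.symm)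
  exact ⟨Y, y, y', φ, hT, by simpa using hφ₁, by rw [← assoc, hφ₂, assoc, hβ₂]⟩

/-- TR3 on the rotated triangles gives a map `A₁⟦1⟧ ⟶ Z⟦1⟧`, which is a shift because the shift
functor is full. -/
lemma exists_lift_comp_shift_eq {A₁ A₂ A₃ Y Z : C} {h₁ : A₁ ⟶ A₂} {h₂ : A₂ ⟶ A₃}
    {y : A₂ ⟶ Y} {y' : Y ⟶ A₁⟦(1:ℤ)⟧} {z₁ : Z ⟶ A₂} {z₃ : A₃ ⟶ Z⟦(1:ℤ)⟧}
    (hT : Triangle.mk h₁ y y' ∈ distTriang C) (hTz : Triangle.mk z₁ h₂ z₃ ∈ distTriang C)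
    {φ : Y ⟶ A₃} (hφ : y ≫ φ = h₂) :
    ∃ β₁ : A₁ ⟶ Z, β₁ ≫ z₁ = h₁ ∧ y' ≫ β₁⟦(1:ℤ)⟧' = φ ≫ z₃ := by
  obtain ⟨c, hc₁, hc₂⟩ : ∃ c : A₁⟦(1:ℤ)⟧ ⟶ Z⟦(1:ℤ)⟧,
      y' ≫ c = φ ≫ z₃ ∧ (-h₁⟦(1:ℤ)⟧') ≫ (𝟙 A₂)⟦(1:ℤ)⟧' = c ≫ (-z₁⟦(1:ℤ)⟧') :=
    complete_distinguished_triangle_morphism _ _ (rot_of_distTriang _ hT)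
      (rot_of_distTriang _ hTz) (𝟙 A₂) φ (hφ.trans (id_comp h₂).symm)
  rw [CategoryTheory.Functor.map_id, comp_id, Preadditive.comp_neg, neg_inj] at hc₂
  refine ⟨(shiftFunctor C (1:ℤ)).preimage c, (shiftFunctor C (1:ℤ)).map_injective ?_, ?_⟩
  · rw [Functor.map_comp, Functor.map_preimage, hc₂]
  · rw [Functor.map_preimage, hc₁]

lemma exists_eq_comp_of_mem_todaCC {A₁ A₂ A₃ A₄ Z : C} {h₁ : A₁ ⟶ A₂} {h₂ : A₂ ⟶ A₃}
    {h₃ : A₃ ⟶ A₄} {z₁ : Z ⟶ A₂} {z₃ : A₃ ⟶ Z⟦(1:ℤ)⟧}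
    (hTz : Triangle.mk z₁ h₂ z₃ ∈ distTriang C) {ψ : A₁⟦(1:ℤ)⟧ ⟶ A₄}
    (hψ : ψ ∈ todaCC h₁ h₂ h₃) :
    ∃ (β₁ : A₁ ⟶ Z) (β₂ : Z⟦(1:ℤ)⟧ ⟶ A₄),
      β₁ ≫ z₁ = h₁ ∧ z₃ ≫ β₂ = h₃ ∧ ψ = β₁⟦(1:ℤ)⟧' ≫ β₂ := by
  obtain ⟨Y, y, y', φ, hT, hφ, hψ⟩ := hψ
  obtain ⟨β₁, hβ₁, hy'β₁⟩ := exists_lift_comp_shift_eq hT hTz hφ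
  have hyy' : y ≫ y' = 0 := comp_distTriang_mor_zero₂₃ _ hT
  have h₂₃ : h₂ ≫ h₃ = 0 := by rw [← hφ, assoc, ← hψ, ← assoc, hyy', zero_comp]
  obtain ⟨γ, hγ⟩ : ∃ γ : Z⟦(1:ℤ)⟧ ⟶ A₄, h₃ = z₃ ≫ γ := Triangle.yoneda_exact₃ _ hTz h₃ h₂₃
  -- The defect `ψ - β₁⟦1⟧' ≫ γ` kills `y'`, so it factors through `-h₁⟦1⟧' = -β₁⟦1⟧' ≫ z₁⟦1⟧'`
  -- and can be absorbed into `γ` without changing `z₃ ≫ γ`.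
  have hy'ψ : y' ≫ (ψ - β₁⟦(1:ℤ)⟧' ≫ γ) = 0 := by
    rw [Preadditive.comp_sub, hψ, ← assoc, hy'β₁, assoc, ← hγ, sub_self]
  obtain ⟨ε, hε⟩ : ∃ ε : A₂⟦(1:ℤ)⟧ ⟶ A₄, ψ - β₁⟦(1:ℤ)⟧' ≫ γ = (-h₁⟦(1:ℤ)⟧') ≫ ε :=
    Triangle.yoneda_exact₃ _ (rot_of_distTriang _ hT) _ hy'ψ
  have hz : z₃ ≫ z₁⟦(1:ℤ)⟧' = 0 := comp_distTriang_mor_zero₃₁ _ hTz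
  refine ⟨β₁, γ - z₁⟦(1:ℤ)⟧' ≫ ε, hβ₁, ?_, ?_⟩
  · rw [Preadditive.comp_sub, ← hγ, ← assoc, hz, zero_comp, sub_zero]
  · rw [sub_eq_iff_eq_add'] at hε
    rw [hε, Preadditive.neg_comp, ← sub_eq_add_neg, Preadditive.comp_sub, ← assoc,
      ← Functor.map_comp, hβ₁]

theorem todaBracket_subadd_first_general
    {X₁ X₂ X₃ X₄ : C} (f₁ f₁' : X₁ ⟶ X₂) (f₂ : X₂ ⟶ X₃) (f₃ : X₃ ⟶ X₄)
    (h₁ : f₁ ≫ f₂ = 0) :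
    todaCC (f₁ + f₁') f₂ f₃ ⊆
      {ψ : X₁⟦(1:ℤ)⟧ ⟶ X₄ |
        ∃ a ∈ todaCC f₁ f₂ f₃, ∃ b ∈ todaCC f₁' f₂ f₃, ψ = a + b} := by
  intro ψ hψ
  obtain ⟨Z, z₁, z₃, hTz⟩ := distinguished_cocone_triangle₁ f₂
  obtain ⟨β₁, β₂, hβ₁, hβ₂, rfl⟩ := exists_eq_comp_of_mem_todaCC hTz hψ
  obtain ⟨βa, hβa⟩ : ∃ βa : X₁ ⟶ Z, f₁ = βa ≫ z₁ := Triangle.coyoneda_exact₂ _ hTz f₁ h₁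
  refine ⟨_, mem_todaCC_of_distTriang hTz βa β₂ hβa.symm hβ₂,
    _, mem_todaCC_of_distTriang hTz (β₁ - βa) β₂ ?_ hβ₂, ?_⟩
  · rw [Preadditive.sub_comp, hβ₁, ← hβa, add_sub_cancel_left]
  · rw [Functor.map_sub, Preadditive.sub_comp, add_sub_cancel]

/-- Subadditivity of the Toda bracket in the first variable. -/
theorem todaBracket_subadd_first
    {X₁ X₂ X₃ X₄ : C} (f₁ f₁' : X₁ ⟶ X₂) (f₂ : X₂ ⟶ X₃) (f₃ : X₃ ⟶ X₄)
    (h₁ : f₁ ≫ f₂ = 0) (h₁' : f₁' ≫ f₂ = 0) (h₂ : f₂ ≫ f₃ = 0) :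
    todaCC (f₁ + f₁') f₂ f₃ ⊆
      {ψ : X₁⟦(1:ℤ)⟧ ⟶ X₄ |
        ∃ a ∈ todaCC f₁ f₂ f₃, ∃ b ∈ todaCC f₁' f₂ f₃, ψ = a + b} :=
  todaBracket_subadd_first_general f₁ f₁' f₂ f₃ h₁
end

section
/- Let C be a pretriangulated category with shift Σ, let X₁ →f₁→ X₂ →f₂→ X₃ →f₃→ X₄ be a diagram in C, and let f₂' : X₂ → X₃ be another morphism, such that f₂ ∘ f₁ = 0, f₂' ∘ f₁ = 0, f₃ ∘ f₂ = 0 and f₃ ∘ f₂' = 0. Then equality holds: ⟨f₃, f₂ + f₂', f₁⟩ = ⟨f₃, f₂, f₁⟩ + ⟨f₃, f₂', f₁⟩, where + on the right denotes the set of sums of one element from each bracket. (This is the case n = 3, i = 2, of the paper's subadditivity Proposition 6.3(3); the proof uses only the pretriangulated axioms.) -/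
/-!
Along a fixed cofiber triangle `A₁ → A₂ → Y → ΣA₁` of `h₁`, the conditions defining the cofiber
bracket are linear in `(h₂, ψ)`, and a comparison map between two cofiber triangles of `h₁`
transports extensions, so every element of the bracket is realised along any chosen triangle.
This gives `⟨f₃, f₂, f₁⟩ + ⟨f₃, f₂', f₁⟩ ⊆ ⟨f₃, f₂ + f₂', f₁⟩`. Conversely, given `ψ` in the
left-hand bracket, `f₁ ≫ f₂ = 0` and `f₂ ≫ f₃ = 0` produce some `a ∈ ⟨f₃, f₂, f₁⟩` along the
triangle of `ψ`, and then `ψ - a ∈ ⟨f₃, f₂', f₁⟩` by linearity.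
-/

open CategoryTheory Category Limits Pretriangulated

variable {C : Type*} [Category C] [Preadditive C] [HasZeroObject C]
  [HasShift C ℤ] [∀ n : ℤ, (CategoryTheory.shiftFunctor C n).Additive] [Pretriangulated C]

open Preadditive

section TodaAlong

omit [HasZeroObject C] [∀ n : ℤ, (shiftFunctor C n).Additive] [Pretriangulated C] in
def todaCCAlong {A₁ A₂ A₃ A₄ Y : C} (y : A₂ ⟶ Y) (y' : Y ⟶ A₁⟦(1:ℤ)⟧)
    (h₂ : A₂ ⟶ A₃) (h₃ : A₃ ⟶ A₄) : Set (A₁⟦(1:ℤ)⟧ ⟶ A₄) :=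
  {ψ | ∃ φ : Y ⟶ A₃, y ≫ φ = h₂ ∧ y' ≫ ψ = φ ≫ h₃}

variable {A₁ A₂ A₃ A₄ Y : C} {y : A₂ ⟶ Y} {y' : Y ⟶ A₁⟦(1:ℤ)⟧}

omit [HasZeroObject C] [∀ n : ℤ, (shiftFunctor C n).Additive] [Pretriangulated C] in
lemma add_mem_todaCCAlong {h₂ h₂' : A₂ ⟶ A₃} {h₃ : A₃ ⟶ A₄} {ψ ψ' : A₁⟦(1:ℤ)⟧ ⟶ A₄}
    (hψ : ψ ∈ todaCCAlong y y' h₂ h₃) (hψ' : ψ' ∈ todaCCAlong y y' h₂' h₃) :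
    ψ + ψ' ∈ todaCCAlong y y' (h₂ + h₂') h₃ := by
  obtain ⟨φ, hφ, hψφ⟩ := hψ
  obtain ⟨φ', hφ', hψφ'⟩ := hψ'
  exact ⟨φ + φ', by rw [comp_add, hφ, hφ'], by rw [comp_add, add_comp, hψφ, hψφ']⟩

omit [HasZeroObject C] [∀ n : ℤ, (shiftFunctor C n).Additive] [Pretriangulated C] in
lemma sub_mem_todaCCAlong {h₂ h₂' : A₂ ⟶ A₃} {h₃ : A₃ ⟶ A₄} {ψ ψ' : A₁⟦(1:ℤ)⟧ ⟶ A₄}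
    (hψ : ψ ∈ todaCCAlong y y' h₂ h₃) (hψ' : ψ' ∈ todaCCAlong y y' h₂' h₃) :
    ψ - ψ' ∈ todaCCAlong y y' (h₂ - h₂') h₃ := by
  obtain ⟨φ, hφ, hψφ⟩ := hψ
  obtain ⟨φ', hφ', hψφ'⟩ := hψ'
  exact ⟨φ - φ', by rw [comp_sub, hφ, hφ'], by rw [comp_sub, sub_comp, hψφ, hψφ']⟩

lemma todaCCAlong_subset_todaCC {h₁ : A₁ ⟶ A₂} (hT : Triangle.mk h₁ y y' ∈ distTriang C)
    (h₂ : A₂ ⟶ A₃) (h₃ : A₃ ⟶ A₄) :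
    todaCCAlong y y' h₂ h₃ ⊆ todaCC h₁ h₂ h₃ :=
  fun _ ⟨φ, hφ, hψ⟩ => ⟨Y, y, y', φ, hT, hφ, hψ⟩

lemma todaCC_subset_todaCCAlong {h₁ : A₁ ⟶ A₂} (hT : Triangle.mk h₁ y y' ∈ distTriang C)
    (h₂ : A₂ ⟶ A₃) (h₃ : A₃ ⟶ A₄) :
    todaCC h₁ h₂ h₃ ⊆ todaCCAlong y y' h₂ h₃ := by
  rintro ψ ⟨Z, z, z', φ, hT', hφ, hψ⟩
  obtain ⟨c, hzc, hcz'⟩ : ∃ c : Y ⟶ Z, y ≫ c = 𝟙 A₂ ≫ z ∧ y' ≫ (𝟙 A₁)⟦(1:ℤ)⟧' = c ≫ z' :=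
    complete_distinguished_triangle_morphism _ _ hT hT' (𝟙 A₁) (𝟙 A₂)
      ((comp_id h₁).trans (id_comp h₁).symm)
  rw [id_comp] at hzc
  rw [CategoryTheory.Functor.map_id, comp_id] at hcz'
  exact ⟨c ≫ φ, by rw [← assoc, hzc, hφ], by rw [hcz', assoc, hψ, assoc]⟩

lemma todaCCAlong_nonempty {h₁ : A₁ ⟶ A₂} (hT : Triangle.mk h₁ y y' ∈ distTriang C)
    {h₂ : A₂ ⟶ A₃} {h₃ : A₃ ⟶ A₄} (h₁₂ : h₁ ≫ h₂ = 0) (h₂₃ : h₂ ≫ h₃ = 0) :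
    (todaCCAlong y y' h₂ h₃).Nonempty := by
  obtain ⟨φ, hφ⟩ : ∃ φ : Y ⟶ A₃, h₂ = y ≫ φ := Triangle.yoneda_exact₂ _ hT h₂ h₁₂
  obtain ⟨ψ, hψ⟩ : ∃ ψ : A₁⟦(1:ℤ)⟧ ⟶ A₄, φ ≫ h₃ = y' ≫ ψ :=
    Triangle.yoneda_exact₃ _ hT (φ ≫ h₃) (show y ≫ φ ≫ h₃ = 0 by rw [← assoc, ← hφ, h₂₃])
  exact ⟨ψ, φ, hφ.symm, hψ.symm⟩

end TodaAlong

theorem todaBracket_add_middle_general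
    {X₁ X₂ X₃ X₄ : C} (f₁ : X₁ ⟶ X₂) (f₂ f₂' : X₂ ⟶ X₃) (f₃ : X₃ ⟶ X₄)
    (h₁ : f₁ ≫ f₂ = 0)
    (h₂ : f₂ ≫ f₃ = 0) :
    todaCC f₁ (f₂ + f₂') f₃ =
      {ψ : X₁⟦(1:ℤ)⟧ ⟶ X₄ |
        ∃ a ∈ todaCC f₁ f₂ f₃, ∃ b ∈ todaCC f₁ f₂' f₃, ψ = a + b} := by
  ext ψ
  constructor
  · rintro ⟨Y, y, y', φ, hT, hφ, hψ⟩
    obtain ⟨a, ha⟩ := todaCCAlong_nonempty hT h₁ h₂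
    have hψa := sub_mem_todaCCAlong ⟨φ, hφ, hψ⟩ ha
    rw [add_sub_cancel_left] at hψa
    exact ⟨a, todaCCAlong_subset_todaCC hT _ _ ha,
      ψ - a, todaCCAlong_subset_todaCC hT _ _ hψa, (add_sub_cancel a ψ).symm⟩
  · rintro ⟨a, ⟨Y, y, y', φ, hT, hφ, ha⟩, b, hb, rfl⟩
    exact todaCCAlong_subset_todaCC hT _ _
      (add_mem_todaCCAlong ⟨φ, hφ, ha⟩ (todaCC_subset_todaCCAlong hT _ _ hb))

/-- Additivity of the Toda bracket in the middle variable. -/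
theorem todaBracket_add_middle
    {X₁ X₂ X₃ X₄ : C} (f₁ : X₁ ⟶ X₂) (f₂ f₂' : X₂ ⟶ X₃) (f₃ : X₃ ⟶ X₄)
    (h₁ : f₁ ≫ f₂ = 0) (h₁' : f₁ ≫ f₂' = 0)
    (h₂ : f₂ ≫ f₃ = 0) (h₂' : f₂' ≫ f₃ = 0) :
    todaCC f₁ (f₂ + f₂') f₃ =
      {ψ : X₁⟦(1:ℤ)⟧ ⟶ X₄ |
        ∃ a ∈ todaCC f₁ f₂ f₃, ∃ b ∈ todaCC f₁ f₂' f₃, ψ = a + b} :=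
  todaBracket_add_middle_general f₁ f₂ f₂' f₃ h₁ h₂
end

section
/- Let C be a pretriangulated category with shift Σ and let X₁ →f₁→ X₂ →f₂→ X₃ →f₃→ X₄ be a diagram in C. For each i ∈ {1,2,3}, negating the i-th morphism negates the iterated cofiber Toda bracket: ⟨f₃,f₂,-f₁⟩cc = -⟨f₃,f₂,f₁⟩cc, ⟨f₃,-f₂,f₁⟩cc = -⟨f₃,f₂,f₁⟩cc, and ⟨-f₃,f₂,f₁⟩cc = -⟨f₃,f₂,f₁⟩cc, where -S denotes the set of negatives of elements of S in the abelian group Hom(ΣX₁, X₄). No hypothesis on the composites f₂ ∘ f₁ or f₃ ∘ f₂ is required. (This is the case n = 3 of the paper's Proposition 6.3(4).) -/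
/-!
Each sign change is absorbed by a witness of the bracket: negating `h₁` is matched by negating
the connecting map `y'` (the triangle with first and third maps negated is isomorphic, via `-𝟙`
on the first vertex, to the original one), negating `h₂` by negating `φ`, and negating `h₃` needs
no change. This gives, for each slot, an inclusion of the negated bracket into the bracket with
that entry negated; since negation is an involution, the reverse inclusion follows.
-/

open CategoryTheory Category Limits Pretriangulated

variable {C : Type*} [Category C] [Preadditive C] [HasZeroObject C]
  [HasShift C ℤ] [∀ n : ℤ, (CategoryTheory.shiftFunctor C n).Additive] [Pretriangulated C]

open scoped Pointwise

lemma apply_neg_eq_neg_of_neg_subset {α M : Type*} [InvolutiveNeg α] [InvolutiveNeg M]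
    (F : α → Set M) (h : ∀ a, -F a ⊆ F (-a)) (a : α) : F (-a) = -F a := by
  refine (h a).antisymm' (Set.neg_subset.mp ?_)
  simpa only [neg_neg] using h (-a)

lemma CategoryTheory.Pretriangulated.distinguished_mk_neg_neg {A B Y : C} {a : A ⟶ B}
    {y : B ⟶ Y} {y' : Y ⟶ A⟦(1 : ℤ)⟧} (h : Triangle.mk a y y' ∈ distTriang C) :
    Triangle.mk (-a) y (-y') ∈ distTriang C := by
  refine isomorphic_distinguished _ h _ <|
    Triangle.isoMk _ _ (-Iso.refl A) (Iso.refl B) (Iso.refl Y) ?_ ?_ ?_ <;> simp [Triangle.mk]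

section

variable {X₁ X₂ X₃ X₄ : C} (f₁ : X₁ ⟶ X₂) (f₂ : X₂ ⟶ X₃) (f₃ : X₃ ⟶ X₄)

lemma neg_todaCC_subset_todaCC_neg_left : -todaCC f₁ f₂ f₃ ⊆ todaCC (-f₁) f₂ f₃ := by
  rintro ψ ⟨Y, y, y', φ, hT, hφ, hψ⟩
  exact ⟨Y, y, -y', φ, distinguished_mk_neg_neg hT, hφ, by simpa using hψ⟩

lemma neg_todaCC_subset_todaCC_neg_mid : -todaCC f₁ f₂ f₃ ⊆ todaCC f₁ (-f₂) f₃ := by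
  rintro ψ ⟨Y, y, y', φ, hT, hφ, hψ⟩
  exact ⟨Y, y, y', -φ, hT, by simp [hφ], by simpa using congrArg Neg.neg hψ⟩

lemma neg_todaCC_subset_todaCC_neg_right : -todaCC f₁ f₂ f₃ ⊆ todaCC f₁ f₂ (-f₃) := by
  rintro ψ ⟨Y, y, y', φ, hT, hφ, hψ⟩
  exact ⟨Y, y, y', φ, hT, hφ, by simpa using congrArg Neg.neg hψ⟩

end

/-- Negating any of the three morphisms negates the iterated cofiber Toda bracket. -/
theorem todaCC_neg
    {X₁ X₂ X₃ X₄ : C} (f₁ : X₁ ⟶ X₂) (f₂ : X₂ ⟶ X₃) (f₃ : X₃ ⟶ X₄) :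
    todaCC (-f₁) f₂ f₃ = (fun ψ => -ψ) '' todaCC f₁ f₂ f₃ ∧
    todaCC f₁ (-f₂) f₃ = (fun ψ => -ψ) '' todaCC f₁ f₂ f₃ ∧
    todaCC f₁ f₂ (-f₃) = (fun ψ => -ψ) '' todaCC f₁ f₂ f₃ := by
  simp only [Set.image_neg_eq_neg]
  exact ⟨apply_neg_eq_neg_of_neg_subset (todaCC · f₂ f₃)
      (neg_todaCC_subset_todaCC_neg_left · f₂ f₃) f₁,
    apply_neg_eq_neg_of_neg_subset (todaCC f₁ · f₃)
      (neg_todaCC_subset_todaCC_neg_mid f₁ · f₃) f₂,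
    apply_neg_eq_neg_of_neg_subset (todaCC f₁ f₂ ·)
      (neg_todaCC_subset_todaCC_neg_right f₁ f₂ ·) f₃⟩
end

section
/- Let C be a pretriangulated category with shift Σ and let X₁ →f₁→ X₂ →f₂→ X₃ →f₃→ X₄ →f₄→ X₅ be a diagram in C. Then f₄ ∘ ⟨f₃,f₂,f₁⟩cc ⊆ ⟨f₄ ∘ f₃, f₂, f₁⟩cc, where f₄ ∘ S denotes the set of composites f₄ ∘ ψ for ψ ∈ S. The same inclusion holds for the iterated fiber and fiber-cofiber Toda brackets. No hypothesis on the composites is required. (This is the case n = 3 of the paper's Proposition 6.5(1).) -/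
open CategoryTheory Category Limits Pretriangulated

variable {C : Type*} [Category C] [Preadditive C] [HasZeroObject C]
  [HasShift C ℤ] [∀ n : ℤ, (CategoryTheory.shiftFunctor C n).Additive] [Pretriangulated C]

/-!
For the cofiber and fiber-cofiber brackets, the witnesses of `ψ` serve for `ψ ≫ f₄` once the
last map is postcomposed with `f₄`. For the fiber bracket, the fiber `W` of `f₃` must be replaced
by a fiber `V` of `f₃ ≫ f₄`; TR3 applied to `(f₄⟦-1⟧', 𝟙 X₃)` gives a map `W ⟶ V` through which
the old witness `γ` is transported.
-/

section

variable {A₁ A₂ A₃ A₄ B : C} {h₁ : A₁ ⟶ A₂} {h₂ : A₂ ⟶ A₃} {h₃ : A₃ ⟶ A₄}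
  {ψ : A₁⟦(1:ℤ)⟧ ⟶ A₄}

lemma comp_mem_todaCC (hψ : ψ ∈ todaCC h₁ h₂ h₃) (g : A₄ ⟶ B) :
    ψ ≫ g ∈ todaCC h₁ h₂ (h₃ ≫ g) := by
  obtain ⟨Y, y, y', φ, hT, hφ, hψ⟩ := hψ
  exact ⟨Y, y, y', φ, hT, hφ, by rw [reassoc_of% hψ]⟩

lemma comp_mem_todaFC (hψ : ψ ∈ todaFC h₁ h₂ h₃) (g : A₄ ⟶ B) :
    ψ ≫ g ∈ todaFC h₁ h₂ (h₃ ≫ g) := by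
  obtain ⟨Z, z₁, z₃, β₁, β₂, hT, hβ₁, hβ₂, rfl⟩ := hψ
  exact ⟨Z, z₁, z₃, β₁, β₂ ≫ g, hT, hβ₁, by rw [reassoc_of% hβ₂], assoc _ _ _⟩

lemma exists_fiber_map_of_comp {W : C} {w : A₄⟦(-1:ℤ)⟧ ⟶ W} {w' : W ⟶ A₃}
    (hT : Triangle.mk w w' (h₃ ≫ (shiftFunctorCompIsoId C (-1) 1 (by omega)).inv.app A₄) ∈
      distTriang C) (g : A₄ ⟶ B) :
    ∃ (V : C) (v : B⟦(-1:ℤ)⟧ ⟶ V) (v' : V ⟶ A₃) (φ : W ⟶ V),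
      Triangle.mk v v' ((h₃ ≫ g) ≫ (shiftFunctorCompIsoId C (-1) 1 (by omega)).inv.app B) ∈
        distTriang C ∧ w ≫ φ = g⟦(-1:ℤ)⟧' ≫ v ∧ φ ≫ v' = w' := by
  obtain ⟨V, v, v', hT'⟩ := distinguished_cocone_triangle₂
    ((h₃ ≫ g) ≫ (shiftFunctorCompIsoId C (-1) 1 (by omega)).inv.app B)
  obtain ⟨φ, hφ₁, hφ₂⟩ := complete_distinguished_triangle_morphism₂ _ _ hT hT'
    (g⟦(-1:ℤ)⟧') (𝟙 A₃) (by
      change (h₃ ≫ _) ≫ g⟦(-1:ℤ)⟧'⟦(1:ℤ)⟧' = 𝟙 A₃ ≫ (h₃ ≫ g) ≫ _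
      rw [id_comp, assoc, assoc]
      exact congrArg _ ((shiftFunctorCompIsoId C (-1) 1 (by omega)).inv.naturality g).symm)
  exact ⟨V, v, v', φ, hT', hφ₁, ((comp_id w').symm.trans hφ₂).symm⟩

lemma comp_mem_todaFF (hψ : ψ ∈ todaFF h₁ h₂ h₃) (g : A₄ ⟶ B) :
    ψ ≫ g ∈ todaFF h₁ h₂ (h₃ ≫ g) := by
  obtain ⟨δ, W, w, w', γ, rfl, hT, hδ, hγ⟩ := hψ
  obtain ⟨V, v, v', φ, hT', hφ₁, hφ₂⟩ := exists_fiber_map_of_comp hT g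
  refine ⟨δ ≫ g⟦(-1:ℤ)⟧', V, v, v', γ ≫ φ, ?_, hT', ?_, by rw [assoc, hφ₂, hγ]⟩
  · rw [Functor.map_comp, assoc, assoc]
    exact congrArg _ ((shiftFunctorCompIsoId C (-1) 1 (by omega)).hom.naturality g).symm
  · rw [assoc, ← hφ₁, ← reassoc_of% hδ]

end

/-- Postcomposition maps a Toda bracket into the bracket with composed last morphism. -/
theorem todaBracket_postcomp
    {X₁ X₂ X₃ X₄ X₅ : C} (f₁ : X₁ ⟶ X₂) (f₂ : X₂ ⟶ X₃) (f₃ : X₃ ⟶ X₄) (f₄ : X₄ ⟶ X₅) :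
    (fun ψ => ψ ≫ f₄) '' todaCC f₁ f₂ f₃ ⊆ todaCC f₁ f₂ (f₃ ≫ f₄) ∧
    (fun ψ => ψ ≫ f₄) '' todaFF f₁ f₂ f₃ ⊆ todaFF f₁ f₂ (f₃ ≫ f₄) ∧
    (fun ψ => ψ ≫ f₄) '' todaFC f₁ f₂ f₃ ⊆ todaFC f₁ f₂ (f₃ ≫ f₄) :=
  ⟨Set.image_subset_iff.2 fun _ hψ => comp_mem_todaCC hψ f₄,
    Set.image_subset_iff.2 fun _ hψ => comp_mem_todaFF hψ f₄,
    Set.image_subset_iff.2 fun _ hψ => comp_mem_todaFC hψ f₄⟩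
end

section
/- Let C be a pretriangulated category with shift Σ and let X₁ →f₁→ X₂ →f₂→ X₃ →f₃→ X₄ →f₄→ X₅ be a diagram in C. Then ⟨f₄,f₃,f₂⟩cc ∘ Σf₁ ⊆ ⟨f₄, f₃, f₂ ∘ f₁⟩cc, where S ∘ Σf₁ denotes the set of composites ψ ∘ Σf₁ for ψ ∈ S ⊆ Hom(ΣX₂, X₅). The same inclusion holds for the iterated fiber and fiber-cofiber Toda brackets. No hypothesis on the composites is required. (This is the case n = 3 of the paper's Proposition 6.5(2).) -/
open CategoryTheory Category Limits Pretriangulated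

variable {C : Type*} [Category C] [Preadditive C] [HasZeroObject C]
  [HasShift C ℤ] [∀ n : ℤ, (CategoryTheory.shiftFunctor C n).Additive] [Pretriangulated C]

section

variable {X₁ X₂ X₃ X₄ X₅ : C} (f₁ : X₁ ⟶ X₂) {f₂ : X₂ ⟶ X₃} {f₃ : X₃ ⟶ X₄} {f₄ : X₄ ⟶ X₅}
  {ψ : X₂⟦(1:ℤ)⟧ ⟶ X₅}

/-- The witness is transported along the morphism of triangles from a cone of `f₁ ≫ f₂` to
the given cone of `f₂` that extends `(f₁, 𝟙 X₃)`. -/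
lemma shift_map_comp_mem_todaCC (hψ : ψ ∈ todaCC f₂ f₃ f₄) :
    f₁⟦(1:ℤ)⟧' ≫ ψ ∈ todaCC (f₁ ≫ f₂) f₃ f₄ := by
  obtain ⟨Y, y, y', φ, hT, hyφ, hy'ψ⟩ := hψ
  obtain ⟨Y', g, g', hT'⟩ := distinguished_cocone_triangle (f₁ ≫ f₂)
  obtain ⟨c, hgc, hg'c⟩ : ∃ c : Y' ⟶ Y, g ≫ c = y ∧ g' ≫ f₁⟦(1:ℤ)⟧' = c ≫ y' := by
    obtain ⟨c, h₂, h₃⟩ := complete_distinguished_triangle_morphism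
      (Triangle.mk (f₁ ≫ f₂) g g') (Triangle.mk f₂ y y') hT' hT f₁ (𝟙 X₃) (comp_id _)
    exact ⟨c, h₂.trans (id_comp y), h₃⟩
  refine ⟨Y', g, g', c ≫ φ, hT', ?_, ?_⟩
  · rw [← assoc, hgc, hyφ]
  · rw [← assoc, hg'c, assoc, hy'ψ, assoc]

lemma shift_map_comp_mem_todaFF (hψ : ψ ∈ todaFF f₂ f₃ f₄) :
    f₁⟦(1:ℤ)⟧' ≫ ψ ∈ todaFF (f₁ ≫ f₂) f₃ f₄ := by
  obtain ⟨δ, W, w, w', γ, rfl, hT, hδγ, hγw'⟩ := hψ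
  exact ⟨f₁ ≫ δ, W, w, w', γ, by rw [Functor.map_comp, assoc], hT,
    by rw [assoc, hδγ, assoc], hγw'⟩

lemma shift_map_comp_mem_todaFC (hψ : ψ ∈ todaFC f₂ f₃ f₄) :
    f₁⟦(1:ℤ)⟧' ≫ ψ ∈ todaFC (f₁ ≫ f₂) f₃ f₄ := by
  obtain ⟨Z, z₁, z₃, β₁, β₂, hT, hβ₁, hβ₂, rfl⟩ := hψ
  exact ⟨Z, z₁, z₃, f₁ ≫ β₁, β₂, hT, by rw [assoc, hβ₁], hβ₂, by rw [Functor.map_comp, assoc]⟩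

end

/-- Precomposition with a suspension maps a Toda bracket into the bracket with composed
first morphism. -/
theorem todaBracket_precomp
    {X₁ X₂ X₃ X₄ X₅ : C} (f₁ : X₁ ⟶ X₂) (f₂ : X₂ ⟶ X₃) (f₃ : X₃ ⟶ X₄) (f₄ : X₄ ⟶ X₅) :
    (fun ψ => f₁⟦(1:ℤ)⟧' ≫ ψ) '' todaCC f₂ f₃ f₄ ⊆ todaCC (f₁ ≫ f₂) f₃ f₄ ∧
    (fun ψ => f₁⟦(1:ℤ)⟧' ≫ ψ) '' todaFF f₂ f₃ f₄ ⊆ todaFF (f₁ ≫ f₂) f₃ f₄ ∧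
    (fun ψ => f₁⟦(1:ℤ)⟧' ≫ ψ) '' todaFC f₂ f₃ f₄ ⊆ todaFC (f₁ ≫ f₂) f₃ f₄ :=
  ⟨Set.image_subset_iff.2 fun _ => shift_map_comp_mem_todaCC f₁,
    Set.image_subset_iff.2 fun _ => shift_map_comp_mem_todaFF f₁,
    Set.image_subset_iff.2 fun _ => shift_map_comp_mem_todaFC f₁⟩
end

section
/- Let C be a pretriangulated category with shift Σ and let X₁ →f₁→ X₂ →f₂→ X₃ →f₃→ X₄ →f₄→ X₅ be a diagram in C. Then the composition can be shifted across the bracket: ⟨f₄, f₃, f₂ ∘ f₁⟩cc ⊆ ⟨f₄, f₃ ∘ f₂, f₁⟩cc, and dually ⟨f₄ ∘ f₃, f₂, f₁⟩ff ⊆ ⟨f₄, f₃ ∘ f₂, f₁⟩ff. No hypothesis on the composites is required. (This is the case n = 3 of the paper's Proposition 6.5(3) and (3').) -/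
open CategoryTheory Category Limits Pretriangulated

variable {C : Type*} [Category C] [Preadditive C] [HasZeroObject C]
  [HasShift C ℤ] [∀ n : ℤ, (CategoryTheory.shiftFunctor C n).Additive] [Pretriangulated C]

/-!
Completing the identity of `X₁` and the map `f₂` to a morphism of distinguished triangles
(TR3) gives a comparison map from the cofiber of `f₁` to the cofiber of `f₁ ≫ f₂`; composing
the witness `φ` of a cofiber bracket with it yields a witness for the bracket with `f₂ ≫ f₃`.
Dually, `f₃` and the identity of `Σ⁻¹X₅` induce a map from the fiber of `f₃ ≫ f₄` to the fiber
of `f₄`, through which the witness `γ` of a fiber bracket is pushed.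
-/

section

variable {A B B' Y Y' W W' : C}

lemma exists_cofiber_map_of_comp (f : A ⟶ B) (g : B ⟶ B')
    {u : B ⟶ Y} {v : Y ⟶ A⟦(1:ℤ)⟧} {u' : B' ⟶ Y'} {v' : Y' ⟶ A⟦(1:ℤ)⟧}
    (hT : Triangle.mk f u v ∈ distTriang C) (hT' : Triangle.mk (f ≫ g) u' v' ∈ distTriang C) :
    ∃ θ : Y ⟶ Y', u ≫ θ = g ≫ u' ∧ θ ≫ v' = v := by
  obtain ⟨θ, hθ₁, hθ₂⟩ := complete_distinguished_triangle_morphism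
    (Triangle.mk f u v) (Triangle.mk (f ≫ g) u' v') hT hT' (𝟙 A) g
    (by dsimp only [Triangle.mk]; simp)
  dsimp only [Triangle.mk] at hθ₁ hθ₂
  rw [CategoryTheory.Functor.map_id, comp_id] at hθ₂
  exact ⟨θ, hθ₁, hθ₂.symm⟩

lemma exists_fiber_map_of_comp_s17 (g : B ⟶ B') (h : B' ⟶ A⟦(1:ℤ)⟧)
    {w : A ⟶ W} {w' : W ⟶ B} {v : A ⟶ W'} {v' : W' ⟶ B'}
    (hT : Triangle.mk w w' (g ≫ h) ∈ distTriang C) (hT' : Triangle.mk v v' h ∈ distTriang C) :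
    ∃ θ : W ⟶ W', w ≫ θ = v ∧ θ ≫ v' = w' ≫ g := by
  obtain ⟨θ, hθ₁, hθ₂⟩ := complete_distinguished_triangle_morphism₂
    (Triangle.mk w w' (g ≫ h)) (Triangle.mk v v' h) hT hT' (𝟙 A) g
    (by dsimp only [Triangle.mk]; simp)
  dsimp only [Triangle.mk] at hθ₁ hθ₂
  rw [id_comp] at hθ₁
  exact ⟨θ, hθ₁, hθ₂.symm⟩

end

section

variable {X₁ X₂ X₃ X₄ X₅ : C} (f₁ : X₁ ⟶ X₂) (f₂ : X₂ ⟶ X₃) (f₃ : X₃ ⟶ X₄) (f₄ : X₄ ⟶ X₅)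

lemma todaCC_comp_subset : todaCC (f₁ ≫ f₂) f₃ f₄ ⊆ todaCC f₁ (f₂ ≫ f₃) f₄ := by
  rintro ψ ⟨Y, y, y', φ, hT, hy, hψ⟩
  obtain ⟨Y₁, u, v, hT₁⟩ := distinguished_cocone_triangle f₁
  obtain ⟨θ, hθu, hθv⟩ := exists_cofiber_map_of_comp f₁ f₂ hT₁ hT
  refine ⟨Y₁, u, v, θ ≫ φ, hT₁, ?_, ?_⟩
  · rw [reassoc_of% hθu, hy]
  · rw [← hθv, assoc, hψ, assoc]

lemma todaFF_comp_subset : todaFF f₁ f₂ (f₃ ≫ f₄) ⊆ todaFF f₁ (f₂ ≫ f₃) f₄ := by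
  rintro ψ ⟨δ, W, w, w', γ, hψ, hT, hδ, hγ⟩
  rw [assoc] at hT
  obtain ⟨W₄, v, v', hT₄⟩ := distinguished_cocone_triangle₂
    (f₄ ≫ (shiftFunctorCompIsoId C (-1) 1 (by omega)).inv.app X₅)
  obtain ⟨θ, hθv, hθv'⟩ := exists_fiber_map_of_comp_s17 f₃ _ hT hT₄
  refine ⟨δ, W₄, v, v', γ ≫ θ, hψ, hT₄, ?_, ?_⟩
  · rw [← hθv, reassoc_of% hδ]
  · rw [assoc, hθv', reassoc_of% hγ]

end

/-- Shifting a composition across the bracket. -/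
theorem todaBracket_shift_comp
    {X₁ X₂ X₃ X₄ X₅ : C} (f₁ : X₁ ⟶ X₂) (f₂ : X₂ ⟶ X₃) (f₃ : X₃ ⟶ X₄) (f₄ : X₄ ⟶ X₅) :
    todaCC (f₁ ≫ f₂) f₃ f₄ ⊆ todaCC f₁ (f₂ ≫ f₃) f₄ ∧
    todaFF f₁ f₂ (f₃ ≫ f₄) ⊆ todaFF f₁ (f₂ ≫ f₃) f₄ :=
  ⟨todaCC_comp_subset f₁ f₂ f₃ f₄, todaFF_comp_subset f₁ f₂ f₃ f₄⟩
end

section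
/- Let C be a pretriangulated category with shift Σ and let X₁ →f₁→ X₂ →f₂→ X₃ →f₃→ X₄ →f₄→ X₅ be a diagram in C with f₂ ∘ f₁ = 0, f₃ ∘ f₂ = 0 and f₄ ∘ f₃ = 0. Then f₄ ∘ ⟨f₃,f₂,f₁⟩ = ⟨f₄,f₃,f₂⟩ ∘ (-Σf₁), i.e. the set of composites f₄ ∘ ψ for ψ ∈ ⟨f₃,f₂,f₁⟩ equals the set of composites -(ψ' ∘ Σf₁) for ψ' ∈ ⟨f₄,f₃,f₂⟩, as subsets of Hom(ΣX₁, X₅). (This is the case n = 3 of the paper's Proposition 6.6(6), where the sign is (-1)ⁿ = -1; the proof uses only the pretriangulated axioms.) -/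
open CategoryTheory Category Limits Pretriangulated

variable {C : Type*} [Category C] [Preadditive C] [HasZeroObject C]
  [HasShift C ℤ] [∀ n : ℤ, (CategoryTheory.shiftFunctor C n).Additive] [Pretriangulated C]

/-! Let `ψ' ∈ ⟨f₄,f₃,f₂⟩` be built on a cofiber triangle of `f₂` with extension `φ'`, and let
`φ` extend `f₂` over a cofiber of `f₁`. Completing `(𝟙, φ)` to a morphism from the rotated
cofiber triangle of `f₁` to that of `f₂` gives `θ : ΣX₁ ⟶ cofib f₂` whose composite with
`cofib f₂ ⟶ ΣX₂` is `-Σf₁` (the sign of the rotation), so `θ ≫ φ' ∈ ⟨f₃,f₂,f₁⟩` and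
`θ ≫ φ' ≫ f₄ = -(Σf₁ ≫ ψ')`. Conversely, two elements of `⟨f₃,f₂,f₁⟩` built on the same `φ`
differ by a map factoring through `Σf₁`, and composing with `f₄` turns that difference into the
indeterminacy `β ≫ f₄` of `⟨f₄,f₃,f₂⟩`. -/

section TodaBracket

variable {A₁ A₂ A₃ A₄ : C} {h₁ : A₁ ⟶ A₂} {h₂ : A₂ ⟶ A₃} {h₃ : A₃ ⟶ A₄}

lemma todaCC_nonempty (h₁₂ : h₁ ≫ h₂ = 0) (h₂₃ : h₂ ≫ h₃ = 0) :
    (todaCC h₁ h₂ h₃).Nonempty := by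
  obtain ⟨Y, y, y', hT⟩ := distinguished_cocone_triangle h₁
  obtain ⟨φ, hφ⟩ : ∃ φ : Y ⟶ A₃, h₂ = y ≫ φ := Triangle.yoneda_exact₂ _ hT h₂ h₁₂
  obtain ⟨ψ, hψ⟩ : ∃ ψ : A₁⟦(1:ℤ)⟧ ⟶ A₄, φ ≫ h₃ = y' ≫ ψ :=
    Triangle.yoneda_exact₃ _ hT (φ ≫ h₃) (by change y ≫ φ ≫ h₃ = 0; rw [← assoc, ← hφ, h₂₃])
  exact ⟨ψ, Y, y, y', φ, hT, hφ.symm, hψ.symm⟩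

lemma add_comp_mem_todaCC {ψ : A₁⟦(1:ℤ)⟧ ⟶ A₄} (hψ : ψ ∈ todaCC h₁ h₂ h₃)
    (β : A₁⟦(1:ℤ)⟧ ⟶ A₃) : ψ + β ≫ h₃ ∈ todaCC h₁ h₂ h₃ := by
  obtain ⟨Y, y, y', φ, hT, hφ, hψ⟩ := hψ
  have hyy' : y ≫ y' = 0 := comp_distTriang_mor_zero₂₃ _ hT
  refine ⟨Y, y, y', φ + y' ≫ β, hT, ?_, ?_⟩
  · rw [Preadditive.comp_add, hφ, ← assoc, hyy', zero_comp, add_zero]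
  · rw [Preadditive.comp_add, hψ, Preadditive.add_comp, assoc]

lemma exists_eq_add_shift_comp_of_comp_eq {Y : C} {y : A₂ ⟶ Y} {y' : Y ⟶ A₁⟦(1:ℤ)⟧}
    (hT : Triangle.mk h₁ y y' ∈ distTriang C) {X : C} {ψ ψ₀ : A₁⟦(1:ℤ)⟧ ⟶ X}
    (h : y' ≫ ψ = y' ≫ ψ₀) : ∃ β : A₂⟦(1:ℤ)⟧ ⟶ X, ψ = ψ₀ + h₁⟦(1:ℤ)⟧' ≫ β := by
  obtain ⟨β, hβ⟩ : ∃ β : A₂⟦(1:ℤ)⟧ ⟶ X, ψ - ψ₀ = (-h₁⟦(1:ℤ)⟧') ≫ β :=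
    Triangle.yoneda_exact₃ _ (rot_of_distTriang _ hT) (ψ - ψ₀)
      (by change y' ≫ (ψ - ψ₀) = 0; rw [Preadditive.comp_sub, h, sub_self])
  refine ⟨-β, ?_⟩
  rw [Preadditive.comp_neg, ← Preadditive.neg_comp, ← hβ]
  abel

end TodaBracket

section Juggle

variable {X₁ X₂ X₃ X₄ X₅ : C} {f₁ : X₁ ⟶ X₂} {f₂ : X₂ ⟶ X₃} {f₃ : X₃ ⟶ X₄} {f₄ : X₄ ⟶ X₅}
  {Y : C} {y : X₂ ⟶ Y} {y' : Y ⟶ X₁⟦(1:ℤ)⟧} {φ : Y ⟶ X₃}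

lemma exists_rotate_hom_cofiber {Z : C} {z : X₃ ⟶ Z} {z' : Z ⟶ X₂⟦(1:ℤ)⟧}
    (hT₁ : Triangle.mk f₁ y y' ∈ distTriang C) (hT₂ : Triangle.mk f₂ z z' ∈ distTriang C)
    (hφ : y ≫ φ = f₂) :
    ∃ θ : X₁⟦(1:ℤ)⟧ ⟶ Z, y' ≫ θ = φ ≫ z ∧ θ ≫ z' = -f₁⟦(1:ℤ)⟧' := by
  obtain ⟨θ, hθ₂, hθ₃⟩ := complete_distinguished_triangle_morphism _ _
    (rot_of_distTriang _ hT₁) hT₂ (𝟙 X₂) φ (by change y ≫ φ = 𝟙 X₂ ≫ f₂; rw [id_comp, hφ])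
  replace hθ₃ : (-f₁⟦(1:ℤ)⟧') ≫ (𝟙 X₂)⟦(1:ℤ)⟧' = θ ≫ z' := hθ₃
  rw [CategoryTheory.Functor.map_id, comp_id] at hθ₃
  exact ⟨θ, hθ₂, hθ₃.symm⟩

lemma exists_comp_eq_neg_shift_comp (hT₁ : Triangle.mk f₁ y y' ∈ distTriang C)
    (hφ : y ≫ φ = f₂) {ψ' : X₂⟦(1:ℤ)⟧ ⟶ X₅} (hψ' : ψ' ∈ todaCC f₂ f₃ f₄) :
    ∃ ψ : X₁⟦(1:ℤ)⟧ ⟶ X₄, y' ≫ ψ = φ ≫ f₃ ∧ ψ ≫ f₄ = -(f₁⟦(1:ℤ)⟧' ≫ ψ') := by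
  obtain ⟨Z, z, z', φ', hT₂, hφ', hψ'⟩ := hψ'
  obtain ⟨θ, hθ₂, hθ₃⟩ := exists_rotate_hom_cofiber hT₁ hT₂ hφ
  refine ⟨θ ≫ φ', ?_, ?_⟩
  · rw [← assoc, hθ₂, assoc, hφ']
  · rw [assoc, ← hψ', ← assoc, hθ₃, Preadditive.neg_comp]

lemma comp_mem_neg_shift_comp_todaCC (h₂₃ : f₂ ≫ f₃ = 0) (h₃₄ : f₃ ≫ f₄ = 0)
    {ψ : X₁⟦(1:ℤ)⟧ ⟶ X₄} (hψ : ψ ∈ todaCC f₁ f₂ f₃) :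
    ∃ ψ' ∈ todaCC f₂ f₃ f₄, ψ ≫ f₄ = -(f₁⟦(1:ℤ)⟧' ≫ ψ') := by
  obtain ⟨Y, y, y', φ, hT₁, hφ, hψ⟩ := hψ
  obtain ⟨ψ₀', hψ₀'⟩ := todaCC_nonempty h₂₃ h₃₄
  obtain ⟨ψ₀, hψ₀, hψ₀f₄⟩ := exists_comp_eq_neg_shift_comp hT₁ hφ hψ₀'
  obtain ⟨β, rfl⟩ := exists_eq_add_shift_comp_of_comp_eq hT₁ (hψ.trans hψ₀.symm)
  refine ⟨ψ₀' + (-β) ≫ f₄, add_comp_mem_todaCC hψ₀' (-β), ?_⟩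
  simp only [Preadditive.add_comp, hψ₀f₄, Preadditive.comp_add, Preadditive.neg_comp, assoc,
    Preadditive.comp_neg, neg_add_rev, neg_neg]
  abel

lemma neg_shift_comp_mem_comp_todaCC (h₁₂ : f₁ ≫ f₂ = 0) {ψ' : X₂⟦(1:ℤ)⟧ ⟶ X₅}
    (hψ' : ψ' ∈ todaCC f₂ f₃ f₄) :
    ∃ ψ ∈ todaCC f₁ f₂ f₃, -(f₁⟦(1:ℤ)⟧' ≫ ψ') = ψ ≫ f₄ := by
  obtain ⟨Y, y, y', hT₁⟩ := distinguished_cocone_triangle f₁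
  obtain ⟨φ, hφ⟩ := Triangle.yoneda_exact₂ _ hT₁ f₂ h₁₂
  obtain ⟨ψ, hψ, hψf₄⟩ := exists_comp_eq_neg_shift_comp hT₁ hφ.symm hψ'
  exact ⟨ψ, ⟨Y, y, y', φ, hT₁, hφ.symm, hψ⟩, hψf₄.symm⟩

end Juggle

/-- Juggling formula: `f₄ ∘ ⟨f₃,f₂,f₁⟩ = ⟨f₄,f₃,f₂⟩ ∘ (-Σf₁)`. -/
theorem todaBracket_juggle
    {X₁ X₂ X₃ X₄ X₅ : C} (f₁ : X₁ ⟶ X₂) (f₂ : X₂ ⟶ X₃) (f₃ : X₃ ⟶ X₄) (f₄ : X₄ ⟶ X₅)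
    (h₁ : f₁ ≫ f₂ = 0) (h₂ : f₂ ≫ f₃ = 0) (h₃ : f₃ ≫ f₄ = 0) :
    {χ : X₁⟦(1:ℤ)⟧ ⟶ X₅ | ∃ ψ ∈ todaCC f₁ f₂ f₃, χ = ψ ≫ f₄} =
    {χ : X₁⟦(1:ℤ)⟧ ⟶ X₅ | ∃ ψ' ∈ todaCC f₂ f₃ f₄, χ = -(f₁⟦(1:ℤ)⟧' ≫ ψ')} := by
  ext χ
  constructor
  · rintro ⟨ψ, hψ, rfl⟩
    exact comp_mem_neg_shift_comp_todaCC h₂ h₃ hψ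
  · rintro ⟨ψ', hψ', rfl⟩
    exact neg_shift_comp_mem_comp_todaCC h₁ hψ'
end

section
/- Let C be a pretriangulated category with shift Σ. A candidate triangle X₁ →f₁→ X₂ →f₂→ X₃ →f₃→ ΣX₁ in C is a distinguished triangle if and only if both of the following hold: (1) the candidate triangle is Yoneda exact, i.e. for every object A of C the sequence of abelian groups Hom(A, X₁) → Hom(A, X₂) → Hom(A, X₃) → Hom(A, ΣX₁) → Hom(A, ΣX₂), with maps given by postcomposition with f₁, f₂, f₃ and Σf₁ respectively, is exact at the three middle spots; and (2) the identity morphism 1_{ΣX₁} belongs to the iterated cofiber Toda bracket ⟨f₃,f₂,f₁⟩cc ⊆ Hom(ΣX₁, ΣX₁). (This is the case n = 3 of the paper's Proposition 7.2, generalizing a theorem of Heller; the proof uses only the pretriangulated axioms.) -/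
open CategoryTheory Category Limits Pretriangulated

variable {C : Type*} [Category C] [Preadditive C] [HasZeroObject C]
  [HasShift C ℤ] [∀ n : ℤ, (CategoryTheory.shiftFunctor C n).Additive] [Pretriangulated C]

/-!
If the triangle is distinguished, Yoneda exactness is the long exact `Hom(A, -)` sequence and the
triangle itself witnesses `𝟙 ∈ ⟨f₃, f₂, f₁⟩cc`. Conversely, a witness gives a distinguished
triangle `X₁ → X₂ → Y → X₁⟦1⟧` and a map `φ : Y ⟶ X₃` such that `(𝟙, 𝟙, φ)` is a morphism of
triangles into the candidate one; a diagram chase in `Hom(A, -)`, using the exactness of both rows,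
shows that `φ` is a monomorphism and a split epimorphism, so the candidate triangle is isomorphic
to a distinguished one.
-/

namespace CategoryTheory.Pretriangulated

section Distinguished

variable {X₁ X₂ X₃ : C} {f₁ : X₁ ⟶ X₂} {f₂ : X₂ ⟶ X₃} {f₃ : X₃ ⟶ X₁⟦(1:ℤ)⟧}
  (hT : Triangle.mk f₁ f₂ f₃ ∈ distTriang C) {A : C}
include hT

lemma coyoneda_exact₂_iff (g : A ⟶ X₂) : g ≫ f₂ = 0 ↔ ∃ g', g' ≫ f₁ = g := by
  refine ⟨fun hg => ?_, ?_⟩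
  · obtain ⟨g', rfl⟩ := Triangle.coyoneda_exact₂ _ hT g hg
    exact ⟨g', rfl⟩
  · rintro ⟨g', rfl⟩
    rw [assoc, show f₁ ≫ f₂ = 0 from comp_distTriang_mor_zero₁₂ _ hT, comp_zero]

lemma coyoneda_exact₃_iff (g : A ⟶ X₃) : g ≫ f₃ = 0 ↔ ∃ g', g' ≫ f₂ = g := by
  refine ⟨fun hg => ?_, ?_⟩
  · obtain ⟨g', rfl⟩ := Triangle.coyoneda_exact₃ _ hT g hg
    exact ⟨g', rfl⟩
  · rintro ⟨g', rfl⟩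
    rw [assoc, show f₂ ≫ f₃ = 0 from comp_distTriang_mor_zero₂₃ _ hT, comp_zero]

lemma coyoneda_exact₁_iff (g : A ⟶ X₁⟦(1:ℤ)⟧) :
    g ≫ f₁⟦(1:ℤ)⟧' = 0 ↔ ∃ g', g' ≫ f₃ = g := by
  refine ⟨fun hg => ?_, ?_⟩
  · obtain ⟨g', rfl⟩ := Triangle.coyoneda_exact₁ _ hT g hg
    exact ⟨g', rfl⟩
  · rintro ⟨g', rfl⟩
    rw [assoc, show f₃ ≫ f₁⟦(1:ℤ)⟧' = 0 from comp_distTriang_mor_zero₃₁ _ hT, comp_zero]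

lemma id_mem_todaCC : 𝟙 (X₁⟦(1:ℤ)⟧) ∈ todaCC f₁ f₂ f₃ :=
  ⟨X₃, f₂, f₃, 𝟙 _, hT, comp_id _, by rw [comp_id, id_comp]⟩

end Distinguished

section ComparisonMap

variable {X₁ X₂ X₃ Y : C} {f₁ : X₁ ⟶ X₂} {f₂ : X₂ ⟶ X₃} {f₃ : X₃ ⟶ X₁⟦(1:ℤ)⟧}
  {y : X₂ ⟶ Y} {y' : Y ⟶ X₁⟦(1:ℤ)⟧} {φ : Y ⟶ X₃}
  (hd : Triangle.mk f₁ y y' ∈ distTriang C) (hyφ : y ≫ φ = f₂) (hφf₃ : y' = φ ≫ f₃)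
include hd hyφ hφf₃

lemma mono_of_coyoneda_exact₂
    (exact₂ : ∀ (A : C) (g : A ⟶ X₂), g ≫ f₂ = 0 → ∃ g', g' ≫ f₁ = g) :
    Mono φ := by
  refine Preadditive.mono_of_cancel_zero φ fun {A} h hh => ?_
  obtain ⟨k, rfl⟩ := (coyoneda_exact₃_iff hd h).1 (by rw [hφf₃, ← assoc, hh, zero_comp])
  obtain ⟨l, rfl⟩ := exact₂ A k (by rw [← hyφ, ← assoc, hh])
  rw [assoc, show f₁ ≫ y = 0 from comp_distTriang_mor_zero₁₂ _ hd, comp_zero]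

lemma isSplitEpi_of_coyoneda_exact₃
    (exact₃ : ∀ (A : C) (g : A ⟶ X₃), g ≫ f₃ = 0 → ∃ g', g' ≫ f₂ = g)
    (hf₃f₁ : f₃ ≫ f₁⟦(1:ℤ)⟧' = 0) : IsSplitEpi φ := by
  obtain ⟨h, hh⟩ := (coyoneda_exact₁_iff hd f₃).1 hf₃f₁
  obtain ⟨k, hk⟩ := exact₃ X₃ (h ≫ φ - 𝟙 X₃) (by
    rw [Preadditive.sub_comp, assoc, ← hφf₃, hh, id_comp, sub_self])
  refine ⟨⟨h - k ≫ y, ?_⟩⟩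
  rw [Preadditive.sub_comp, assoc, hyφ, hk, sub_sub_cancel]

lemma distinguished_of_isIso [IsIso φ] : Triangle.mk f₁ f₂ f₃ ∈ distTriang C :=
  isomorphic_distinguished _ hd _ <| Iso.symm <|
    Triangle.isoMk (Triangle.mk f₁ y y') (Triangle.mk f₁ f₂ f₃) (Iso.refl X₁) (Iso.refl X₂)
      (asIso φ :) ((comp_id f₁).trans (id_comp f₁).symm) (hyφ.trans (id_comp f₂).symm)
      ((congrArg (y' ≫ ·) (Functor.map_id _ _)).trans ((comp_id y').trans hφf₃))

end ComparisonMap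

end CategoryTheory.Pretriangulated

/-- Heller's criterion: a candidate triangle is distinguished iff it is Yoneda exact and
the iterated cofiber Toda bracket contains the identity. -/
theorem distinguished_iff_yonedaExact_and_id_mem_todaCC
    {X₁ X₂ X₃ : C} (f₁ : X₁ ⟶ X₂) (f₂ : X₂ ⟶ X₃) (f₃ : X₃ ⟶ X₁⟦(1:ℤ)⟧) :
    (Triangle.mk f₁ f₂ f₃ ∈ distTriang C) ↔
      ((∀ (A : C) (g : A ⟶ X₂), g ≫ f₂ = 0 ↔ ∃ g' : A ⟶ X₁, g' ≫ f₁ = g) ∧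
       (∀ (A : C) (g : A ⟶ X₃), g ≫ f₃ = 0 ↔ ∃ g' : A ⟶ X₂, g' ≫ f₂ = g) ∧
       (∀ (A : C) (g : A ⟶ X₁⟦(1:ℤ)⟧), g ≫ f₁⟦(1:ℤ)⟧' = 0 ↔ ∃ g' : A ⟶ X₃, g' ≫ f₃ = g)) ∧
      𝟙 (X₁⟦(1:ℤ)⟧) ∈ todaCC f₁ f₂ f₃ := by
  refine ⟨fun hT => ⟨⟨fun _ => coyoneda_exact₂_iff hT, fun _ => coyoneda_exact₃_iff hT,
    fun _ => coyoneda_exact₁_iff hT⟩, id_mem_todaCC hT⟩, ?_⟩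
  rintro ⟨⟨exact₂, exact₃, exact₁⟩, Y, y, y', φ, hd, hyφ, hy'⟩
  rw [comp_id] at hy'
  have hf₃f₁ : f₃ ≫ f₁⟦(1:ℤ)⟧' = 0 := (exact₁ _ f₃).2 ⟨𝟙 _, id_comp _⟩
  have := mono_of_coyoneda_exact₂ hd hyφ hy' fun A g => (exact₂ A g).1
  have := isSplitEpi_of_coyoneda_exact₃ hd hyφ hy' (fun A g => (exact₃ A g).1) hf₃f₁
  have := isIso_of_mono_of_isSplitEpi φ
  exact distinguished_of_isIso hd hyφ hy'
end
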